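/- arXiv:2210.15829 — 7 statements merged into one kernel-verified Lean document; each statement's English description precedes it below -/
import Mathlib

section
/- Let (ε_j, Z_j) and (ε_l, Z_l) be two independent, identically distributed random pairs on a probability space (Ω, 𝓕, P), with values in ℝ × ℝ^q and ε_j integrable. Then ∫_{ℝ^q} |E[ε_j · exp(i⟨t, Z_j⟩)]|² dμ(t) = E[ε_j · ε_l · k(Z_j − Z_l)], where |·| denotes the complex modulus (equivalence of the SMD objective function in characteristic-function form and in kernel-weighted double-expectation form). -/
/-!
If `X` and `Y` are i.i.d. complex random variables, then `E[X] · conj E[Y]` is `‖E[X]‖²` by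
identical distribution and `E[X · conj Y]` by independence. Applied to `X = εj e^{i⟨t,Zj⟩}` and
`Y = εl e^{i⟨t,Zl⟩}` this gives `‖E[εj e^{i⟨t,Zj⟩}]‖² = E[εj εl e^{i⟨t,Zj - Zl⟩}]`. Integrating
in `t` and swapping the integrals (the integrand is bounded by `|εj εl|`, integrable by
independence) turns the inner `μ`-integral into `k (Zj - Zl)`.
-/

open MeasureTheory ProbabilityTheory Complex Matrix ComplexConjugate

theorem cexp_I_mul_mul_conj_cexp_I_mul (x y : ℝ) :
    cexp (I * x) * conj (cexp (I * y)) = cexp (I * ↑(x - y)) := by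
  rw [← Complex.exp_conj, ← exp_add, map_mul, conj_I, conj_ofReal]
  push_cast
  ring_nf

section

variable {Ω : Type*} [MeasurableSpace Ω] {P : Measure Ω}

theorem ProbabilityTheory.IndepFun.ofReal_sq_norm_integral_eq_integral_mul_conj
    [IsProbabilityMeasure P] {X Y : Ω → ℂ} (hindep : IndepFun X Y P)
    (hident : IdentDistrib X Y P P) :
    ((‖∫ ω, X ω ∂P‖ ^ 2 : ℝ) : ℂ) = ∫ ω, X ω * conj (Y ω) ∂P := by
  have hconj : conj (∫ ω, X ω ∂P) = ∫ ω, conj (Y ω) ∂P := by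
    rw [← integral_conj]
    exact (hident.comp continuous_conj.measurable).integral_eq
  rw [Complex.sq_norm, ← mul_conj, hconj]
  exact ((hindep.comp measurable_id continuous_conj.measurable).integral_fun_mul_eq_mul_integral
    hident.aemeasurable_fst.aestronglyMeasurable
    (continuous_conj.comp_aestronglyMeasurable hident.aemeasurable_snd.aestronglyMeasurable)).symm

theorem MeasureTheory.Integrable.ofReal_mul_cexp_I_mul {ε θ : Ω → ℝ} (hε : Integrable ε P)
    (hθ : AEMeasurable θ P) : Integrable (fun ω => (ε ω : ℂ) * cexp (I * θ ω)) P := by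
  refine hε.ofReal.mul_bdd (c := 1) (by fun_prop) (ae_of_all _ fun ω => ?_)
  rw [mul_comm, norm_exp_ofReal_mul_I]

theorem integral_integral_ofReal_mul_cexp_dotProduct_swap [SFinite P] {ι : Type*} [Fintype ι]
    {μ : Measure (ι → ℝ)} [IsFiniteMeasure μ] {w : Ω → ℝ} {D : Ω → ι → ℝ}
    (hw : Integrable w P) (hD : AEMeasurable D P) :
    ∫ t, ∫ ω, (w ω : ℂ) * cexp (I * ↑(t ⬝ᵥ D ω)) ∂P ∂μ
      = ∫ ω, (w ω : ℂ) * ∫ t, cexp (I * ↑(t ⬝ᵥ D ω)) ∂μ ∂P := by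
  have hdot : AEMeasurable (fun p : (ι → ℝ) × Ω => p.1 ⬝ᵥ D p.2) (μ.prod P) :=
    (continuous_fst.dotProduct continuous_snd).measurable.comp_aemeasurable
      (measurable_fst.aemeasurable.prodMk hD.comp_snd)
  rw [integral_integral_swap ((hw.comp_snd μ).ofReal_mul_cexp_I_mul hdot)]
  simp_rw [integral_const_mul]

end

theorem smd_objective_equivalence_general
    {Ω : Type*} [MeasurableSpace Ω] (P : Measure Ω) [IsProbabilityMeasure P]
    {q : ℕ} (μ : Measure (Fin q → ℝ)) [IsFiniteMeasure μ]
    (k : (Fin q → ℝ) → ℝ)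
    (hk : ∀ u, (k u : ℂ) = ∫ t, Complex.exp (Complex.I * ((t ⬝ᵥ u : ℝ) : ℂ)) ∂μ)
    (εj εl : Ω → ℝ) (Zj Zl : Ω → Fin q → ℝ)
    (hεjint : Integrable εj P)
    (hindep : IndepFun (fun ω => (εj ω, Zj ω)) (fun ω => (εl ω, Zl ω)) P)
    (hident : IdentDistrib (fun ω => (εj ω, Zj ω)) (fun ω => (εl ω, Zl ω)) P P) :
    ∫ t, (‖∫ ω, (εj ω : ℂ) *
          Complex.exp (Complex.I * ((t ⬝ᵥ Zj ω : ℝ) : ℂ)) ∂P‖) ^ 2 ∂μ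
      = ∫ ω, εj ω * εl ω * k (Zj ω - Zl ω) ∂P := by
  have hsq (t : Fin q → ℝ) : ((‖∫ ω, (εj ω : ℂ) * cexp (I * ↑(t ⬝ᵥ Zj ω)) ∂P‖ ^ 2 : ℝ) : ℂ)
      = ∫ ω, ↑(εj ω * εl ω) * cexp (I * ↑(t ⬝ᵥ (Zj ω - Zl ω))) ∂P := by
    let f : ℝ × (Fin q → ℝ) → ℂ := fun p => p.1 * cexp (I * ↑(t ⬝ᵥ p.2))
    have hf : Measurable f := by fun_prop
    refine ((hindep.comp hf hf).ofReal_sq_norm_integral_eq_integral_mul_conj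
      (hident.comp hf)).trans ?_
    congr with ω
    simp only [f, Function.comp_apply, map_mul, conj_ofReal, dotProduct_sub]
    rw [← cexp_I_mul_mul_conj_cexp_I_mul]
    push_cast
    ring
  have hεlint : Integrable εl P := (hident.comp measurable_fst).integrable_iff.mp hεjint
  have hmul : Integrable (fun ω => εj ω * εl ω) P :=
    (hindep.comp measurable_fst measurable_fst).integrable_mul hεjint hεlint
  have hdiff : AEMeasurable (fun ω => Zj ω - Zl ω) P :=
    hident.aemeasurable_fst.snd.sub hident.aemeasurable_snd.snd
  rw [← ofReal_inj, ← integral_complex_ofReal, ← integral_complex_ofReal]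
  simp_rw [hsq]
  rw [integral_integral_ofReal_mul_cexp_dotProduct_swap hmul hdiff]
  congr with ω
  rw [← hk]
  push_cast
  rfl

/-- Equivalence of the SMD objective function in characteristic-function form and in
kernel-weighted double-expectation form: for two iid pairs `(εj, Zj)` and `(εl, Zl)`,
`∫ |E[εj · exp(i⟨t,Zj⟩)]|² dμ(t) = E[εj · εl · k(Zj − Zl)]`. -/
theorem smd_objective_equivalence
    {Ω : Type*} [MeasurableSpace Ω] (P : Measure Ω) [IsProbabilityMeasure P]
    {q : ℕ} (μ : Measure (Fin q → ℝ)) [IsFiniteMeasure μ]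
    (hμsymm : μ.map (fun t => -t) = μ)
    (k : (Fin q → ℝ) → ℝ)
    (hk : ∀ u, (k u : ℂ) = ∫ t, Complex.exp (Complex.I * ((t ⬝ᵥ u : ℝ) : ℂ)) ∂μ)
    (εj εl : Ω → ℝ) (Zj Zl : Ω → Fin q → ℝ)
    (hεjmeas : Measurable εj) (hεlmeas : Measurable εl)
    (hZjmeas : Measurable Zj) (hZlmeas : Measurable Zl)
    (hεjint : Integrable εj P)
    (hindep : IndepFun (fun ω => (εj ω, Zj ω)) (fun ω => (εl ω, Zl ω)) P)
    (hident : IdentDistrib (fun ω => (εj ω, Zj ω)) (fun ω => (εl ω, Zl ω)) P P) :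
    ∫ t, (‖∫ ω, (εj ω : ℂ) *
          Complex.exp (Complex.I * ((t ⬝ᵥ Zj ω : ℝ) : ℂ)) ∂P‖) ^ 2 ∂μ
      = ∫ ω, εj ω * εl ω * k (Zj ω - Zl ω) ∂P :=
  smd_objective_equivalence_general P μ k hk εj εl Zj Zl hεjint hindep hident
end

section
/- Let D_j, D_l, D_m be three mutually independent observations with the common distribution, in the partially linear model. If the p×p matrix A := E[k(Z_j − Z_l)(P̃_j − H(X_l)) P̃_lᵀ] is invertible, then θ₀ = A⁻¹ · E[k(Z_j − Z_l)(P̃_j − H(X_l)) ỹ_l] (identification of θ₀ from the Neyman-orthogonalized first-order condition). -/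
open MeasureTheory ProbabilityTheory Matrix

/-!
Subtracting the conditional means given `X` removes `f(X)` from the model, so
`ỹ_l = ⟨P̃_l, θ₀⟩ + ε_l` a.s. Multiplying by the weight `w = k(Z_j − Z_l)(P̃_j − H(X_l))` and
integrating gives `E[w ỹ_l] = A θ₀ + E[w ε_l]`. The error term vanishes: conditionally on `D_j`
the weight is a bounded function of `(X_l, Z_l)`, and `E[ε_l | X_l, Z_l] = 0`. Integrability
comes from `|k| ≤ μ(ℝ^{q_z})`, the bound on `H` and the independence of `D_j` and `D_l`.
-/

lemma norm_integral_exp_I_mul_le {α : Type*} [MeasurableSpace α] (μ : Measure α)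
    [IsFiniteMeasure μ] (φ : α → ℝ) :
    ‖∫ t, Complex.exp (Complex.I * (φ t : ℂ)) ∂μ‖ ≤ μ.real Set.univ := by
  simpa using norm_integral_le_of_norm_le_const (μ := μ) (C := 1)
    (ae_of_all _ fun t => (Complex.norm_exp_I_mul_ofReal (φ t)).le)

lemma measurable_of_ofReal_eq_integral_exp {n : ℕ} {μ : Measure (Fin n → ℝ)} [IsFiniteMeasure μ]
    {k : (Fin n → ℝ) → ℝ}
    (hk : ∀ u, (k u : ℂ) = ∫ t, Complex.exp (Complex.I * ((t ⬝ᵥ u : ℝ) : ℂ)) ∂μ) :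
    Measurable k := by
  have hF : StronglyMeasurable fun u : Fin n → ℝ =>
      ∫ t, Complex.exp (Complex.I * ((t ⬝ᵥ u : ℝ) : ℂ)) ∂μ :=
    StronglyMeasurable.integral_prod_right'
      (f := fun q : (Fin n → ℝ) × (Fin n → ℝ) =>
        Complex.exp (Complex.I * ((q.2 ⬝ᵥ q.1 : ℝ) : ℂ)))
      (by fun_prop : Continuous _).stronglyMeasurable
  have hre : k = fun u => (∫ t, Complex.exp (Complex.I * ((t ⬝ᵥ u : ℝ) : ℂ)) ∂μ).re := by
    funext u; rw [← hk u, Complex.ofReal_re]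
  rw [hre]
  exact Complex.measurable_re.comp hF.measurable

section ConditionalExpectation

variable {Ω : Type*} {m m₀ : MeasurableSpace Ω} {P : Measure Ω}

lemma condExp_dotProduct_const {p : ℕ} {V : Ω → Fin p → ℝ} (hV : Integrable V P)
    (θ : Fin p → ℝ) :
    P[fun ω => V ω ⬝ᵥ θ | m] =ᵐ[P] fun ω => P[V | m] ω ⬝ᵥ θ :=
  (LinearMap.toContinuousLinearMap ((dotProductBilin ℝ ℝ).flip θ)).comp_condExp_comm hV |>.symm

lemma condExp_ae_eq_zero_of_le {m₁ m₂ : MeasurableSpace Ω} (h₁₂ : m₁ ≤ m₂) (h₂ : m₂ ≤ m₀)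
    [SigmaFinite (P.trim h₂)] {ε : Ω → ℝ} (hε : P[ε | m₂] =ᵐ[P] 0) : P[ε | m₁] =ᵐ[P] 0 := by
  calc P[ε | m₁] =ᵐ[P] P[P[ε | m₂] | m₁] := (condExp_condExp_of_le h₁₂ h₂).symm
    _ =ᵐ[P] P[0 | m₁] := condExp_congr_ae hε
    _ = 0 := condExp_zero

lemma integral_comp_mul_eq_zero_of_condExp_eq_zero [IsFiniteMeasure P] {α : Type*}
    [MeasurableSpace α] {X : Ω → α} (hX : Measurable X) {ψ : α → ℝ} (hψ : Measurable ψ)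
    {C : ℝ} (hψC : ∀ a, |ψ a| ≤ C) {ε : Ω → ℝ} (hε : Integrable ε P)
    (hεX : P[ε | MeasurableSpace.comap X inferInstance] =ᵐ[P] 0) :
    ∫ ω, ψ (X ω) * ε ω ∂P = 0 := by
  have hψX : StronglyMeasurable[MeasurableSpace.comap X inferInstance] (fun ω => ψ (X ω)) :=
    (hψ.comp (comap_measurable X)).stronglyMeasurable
  have hpull := condExp_stronglyMeasurable_mul_of_bound hX.comap_le hψX hε C
    (ae_of_all _ fun ω => by simpa [Real.norm_eq_abs] using hψC (X ω))
  calc ∫ ω, ψ (X ω) * ε ω ∂P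
      = ∫ ω, P[(fun ω => ψ (X ω)) * ε | MeasurableSpace.comap X inferInstance] ω ∂P :=
        (integral_condExp hX.comap_le).symm
    _ = ∫ _, (0 : ℝ) ∂P := integral_congr_ae <| hpull.trans <| hεX.mono fun ω h => by
        simp [h]
    _ = 0 := integral_zero _ _

lemma sub_condExp_ae_eq_of_partiallyLinear [IsFiniteMeasure P] {α β : Type*}
    [MeasurableSpace α] [MeasurableSpace β] {p : ℕ} {θ : Fin p → ℝ} {f : α → ℝ}
    (hf : Measurable f) {y ε : Ω → ℝ} {V : Ω → Fin p → ℝ} {X : Ω → α} {Z : Ω → β}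
    (hX : Measurable X) (hZ : Measurable Z) (hy : Integrable y P) (hV : Integrable V P)
    (hε : Integrable ε P) (hmodel : ∀ ω, y ω = V ω ⬝ᵥ θ + f (X ω) + ε ω)
    (hεXZ : P[ε | MeasurableSpace.comap (fun ω => (X ω, Z ω)) inferInstance] =ᵐ[P] 0) :
    (fun ω => y ω - P[y | MeasurableSpace.comap X inferInstance] ω) =ᵐ[P]
      fun ω => (V ω - P[V | MeasurableSpace.comap X inferInstance] ω) ⬝ᵥ θ + ε ω := by
  set mX := MeasurableSpace.comap X inferInstance
  have hVθ : Integrable (fun ω => V ω ⬝ᵥ θ) P :=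
    (LinearMap.toContinuousLinearMap ((dotProductBilin ℝ ℝ).flip θ)).integrable_comp hV
  have hfX : Integrable (fun ω => f (X ω)) P :=
    ((hy.sub hVθ).sub hε).congr (ae_of_all _ fun ω => by simp only [Pi.sub_apply, hmodel ω]; ring)
  have hy_eq : y = (fun ω => V ω ⬝ᵥ θ) + ((fun ω => f (X ω)) + ε) := funext fun ω => by
    simp only [hmodel ω, Pi.add_apply]; ring
  have hεX : P[ε | mX] =ᵐ[P] 0 :=
    condExp_ae_eq_zero_of_le (comap_measurable fun ω => (X ω, Z ω)).fst.comap_le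
      (hX.prodMk hZ).comap_le hεXZ
  have hfX_cond : P[fun ω => f (X ω) | mX] = fun ω => f (X ω) :=
    condExp_of_stronglyMeasurable hX.comap_le (hf.comp (comap_measurable X)).stronglyMeasurable hfX
  have hy_cond : P[y | mX] =ᵐ[P] fun ω => P[V | mX] ω ⬝ᵥ θ + f (X ω) := by
    rw [hy_eq]
    filter_upwards [condExp_add hVθ (hfX.add hε) mX, condExp_add hfX hε mX,
      condExp_dotProduct_const (m := mX) hV θ, hεX] with ω h₁ h₂ h₃ h₄
    rw [h₁, Pi.add_apply, h₂, Pi.add_apply, h₃, hfX_cond, h₄, Pi.zero_apply, add_zero]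
  filter_upwards [hy_cond] with ω hω
  rw [hω, sub_dotProduct, hmodel ω]
  ring

end ConditionalExpectation

namespace ProbabilityTheory

variable {Ω β γ : Type*} [MeasurableSpace Ω] [MeasurableSpace β] [MeasurableSpace γ]
  {P : Measure Ω} {V : Ω → β} {W : Ω → γ}

lemma IndepFun.integrable_mul_of_abs_le (hVW : IndepFun V W P)
    (hV : Measurable V) (hW : Measurable W) {g : β × γ → ℝ} (hg : Measurable g) {u : β → ℝ}
    (hu : Measurable u) (hgu : ∀ b c, |g (b, c)| ≤ u b) (hui : Integrable (fun ω => u (V ω)) P)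
    {h : γ → ℝ} (hh : Measurable h) (hhi : Integrable (fun ω => h (W ω)) P) :
    Integrable (fun ω => g (V ω, W ω) * h (W ω)) P := by
  have hprod : Integrable ((fun ω => u (V ω)) * fun ω => |h (W ω)|) P :=
    (hVW.comp hu (continuous_abs.measurable.comp hh)).integrable_mul hui hhi.abs
  refine hprod.mono' ((hg.comp (hV.prodMk hW)).mul (hh.comp hW)).aestronglyMeasurable
    (ae_of_all _ fun ω => ?_)
  rw [Real.norm_eq_abs, abs_mul]
  exact mul_le_mul_of_nonneg_right (hgu _ _) (abs_nonneg _)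

lemma IndepFun.integral_eq_zero_of_forall_integral_eq_zero [IsFiniteMeasure P]
    (hVW : IndepFun V W P) (hV : Measurable V) (hW : Measurable W) {G : β × γ → ℝ}
    (hG : Measurable G) (hGi : Integrable (fun ω => G (V ω, W ω)) P)
    (h0 : ∀ b, ∫ ω, G (b, W ω) ∂P = 0) :
    ∫ ω, G (V ω, W ω) ∂P = 0 := by
  have hlaw : P.map (fun ω => (V ω, W ω)) = (P.map V).prod (P.map W) :=
    (indepFun_iff_map_prod_eq_prod_map_map hV.aemeasurable hW.aemeasurable).1 hVW
  have hGi' : Integrable G ((P.map V).prod (P.map W)) := by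
    rwa [← hlaw, integrable_map_measure hG.aestronglyMeasurable
      (hV.prodMk hW).aemeasurable]
  rw [← integral_map (hV.prodMk hW).aemeasurable hG.aestronglyMeasurable, hlaw,
    integral_prod G hGi']
  refine integral_eq_zero_of_ae (ae_of_all _ fun b => ?_)
  exact (integral_map (f := fun c => G (b, c)) hW.aemeasurable
    (hG.comp measurable_prodMk_left).aestronglyMeasurable).trans (h0 b)

lemma IndepFun.integral_mul_eq_zero_of_condExp_eq_zero [IsFiniteMeasure P]
    {e : Ω → ℝ} (hVW : IndepFun V (fun ω => (W ω, e ω)) P) (hV : Measurable V)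
    (hW : Measurable W) (he : Measurable e) {g : β × γ → ℝ} (hg : Measurable g) {u : β → ℝ}
    (hu : Measurable u) (hgu : ∀ b c, |g (b, c)| ≤ u b) (hui : Integrable (fun ω => u (V ω)) P)
    (hei : Integrable e P) (heW : P[e | MeasurableSpace.comap W inferInstance] =ᵐ[P] 0) :
    ∫ ω, g (V ω, W ω) * e ω ∂P = 0 :=
  hVW.integral_eq_zero_of_forall_integral_eq_zero hV (hW.prodMk he)
    (G := fun q => g (q.1, q.2.1) * q.2.2) (by fun_prop)
    (hVW.integrable_mul_of_abs_le hV (hW.prodMk he) (g := fun q => g (q.1, q.2.1))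
      (by fun_prop) hu (fun b c => hgu b c.1) hui (h := Prod.snd) measurable_snd hei)
    fun b => integral_comp_mul_eq_zero_of_condExp_eq_zero hW (ψ := fun c => g (b, c))
      (by fun_prop) (hgu b) hei heW

end ProbabilityTheory

lemma eq_inv_mulVec_of_integral_mul_eq_zero {Ω : Type*} [MeasurableSpace Ω] {P : Measure Ω}
    {p : ℕ} {θ : Fin p → ℝ} {A : Matrix (Fin p) (Fin p) ℝ} (hA : IsUnit A.det)
    {w V : Ω → Fin p → ℝ} {y ε : Ω → ℝ} (hAw : A = of fun r s => ∫ ω, w ω r * V ω s ∂P)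
    (hy : y =ᵐ[P] fun ω => V ω ⬝ᵥ θ + ε ω)
    (hwV : ∀ r s, Integrable (fun ω => w ω r * V ω s) P)
    (hwε : ∀ r, Integrable (fun ω => w ω r * ε ω) P)
    (horth : ∀ r, ∫ ω, w ω r * ε ω ∂P = 0) :
    θ = A⁻¹ *ᵥ fun r => ∫ ω, w ω r * y ω ∂P := by
  suffices hAθ : (fun r => ∫ ω, w ω r * y ω ∂P) = A *ᵥ θ by
    rw [hAθ, mulVec_mulVec, nonsing_inv_mul A hA, one_mulVec]
  funext r
  have hsplit : (fun ω => w ω r * y ω) =ᵐ[P]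
      fun ω => ∑ s, θ s * (w ω r * V ω s) + w ω r * ε ω := by
    filter_upwards [hy] with ω hω
    rw [hω, mul_add, dotProduct, Finset.mul_sum]
    congr 1
    exact Finset.sum_congr rfl fun s _ => by ring
  have hsum : Integrable (fun ω => ∑ s, θ s * (w ω r * V ω s)) P :=
    integrable_finsetSum _ fun s _ => (hwV r s).const_mul (θ s)
  rw [integral_congr_ae hsplit, integral_add hsum (hwε r), horth r, add_zero,
    integral_finsetSum _ fun s _ => (hwV r s).const_mul (θ s), mulVec, dotProduct, hAw]
  exact Finset.sum_congr rfl fun s _ => by rw [integral_const_mul, of_apply, mul_comm]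

section KernelWeight

variable {p qX qz : ℕ} {k : (Fin qz → ℝ) → ℝ} {H : (Fin qX → ℝ) → Fin p → ℝ}

/-- The weight `k(Z_j − Z_l) (P̃_j − H(X_l))`, as a function of `(P̃_j, Z_j)` and `(X_l, Z_l)`. -/
def kernelWeight (k : (Fin qz → ℝ) → ℝ) (H : (Fin qX → ℝ) → Fin p → ℝ)
    (b : (Fin p → ℝ) × (Fin qz → ℝ)) (s : (Fin qX → ℝ) × (Fin qz → ℝ)) (r : Fin p) : ℝ :=
  k (b.2 - s.2) * (b.1 r - H s.1 r)

lemma measurable_kernelWeight (hk : Measurable k) (hH : Measurable H) (r : Fin p) :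
    Measurable fun q : ((Fin p → ℝ) × (Fin qz → ℝ)) × ((Fin qX → ℝ) × (Fin qz → ℝ)) =>
      kernelWeight k H q.1 q.2 r := by
  unfold kernelWeight; fun_prop

lemma abs_kernelWeight_le {K C : ℝ} (hkK : ∀ u, |k u| ≤ K) (hHC : ∀ x, ‖H x‖ ≤ C)
    (b : (Fin p → ℝ) × (Fin qz → ℝ)) (s : (Fin qX → ℝ) × (Fin qz → ℝ)) (r : Fin p) :
    |kernelWeight k H b s r| ≤ K * (‖b.1‖ + C) := by
  rw [kernelWeight, abs_mul]
  refine mul_le_mul (hkK _) ((abs_sub _ _).trans (add_le_add ?_ ?_)) (abs_nonneg _)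
    ((abs_nonneg _).trans (hkK 0))
  · exact (norm_le_pi_norm b.1 r).trans' (Real.norm_eq_abs _).ge
  · exact ((norm_le_pi_norm (H s.1) r).trans (hHC s.1)).trans' (Real.norm_eq_abs _).ge

lemma eq_inv_mulVec_integral_kernelWeight_mul {Ω : Type*} [MeasurableSpace Ω]
    {P : Measure Ω} [IsProbabilityMeasure P] {K C : ℝ} (hk : Measurable k)
    (hkK : ∀ u, |k u| ≤ K) (hH : Measurable H) (hHC : ∀ x, ‖H x‖ ≤ C)
    {Pt₀ Pt₁ : Ω → Fin p → ℝ} {Z₀ : Ω → Fin qz → ℝ} {S : Ω → (Fin qX → ℝ) × (Fin qz → ℝ)}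
    {e ytil : Ω → ℝ} (hPt₀ : Measurable Pt₀) (hPt₁ : Measurable Pt₁) (hZ₀ : Measurable Z₀)
    (hS : Measurable S) (he : Measurable e) (hPt₀i : Integrable Pt₀ P)
    (hPt₁i : Integrable Pt₁ P) (hei : Integrable e P)
    (hindep : IndepFun (fun ω => (Pt₀ ω, Z₀ ω)) (fun ω => (S ω, Pt₁ ω, e ω)) P)
    (heS : P[e | MeasurableSpace.comap S inferInstance] =ᵐ[P] 0) {θ : Fin p → ℝ}
    (hytil : ytil =ᵐ[P] fun ω => Pt₁ ω ⬝ᵥ θ + e ω) {A : Matrix (Fin p) (Fin p) ℝ}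
    (hA : A = of fun r s => ∫ ω, kernelWeight k H (Pt₀ ω, Z₀ ω) (S ω) r * Pt₁ ω s ∂P)
    (hAinv : IsUnit A.det) :
    θ = A⁻¹ *ᵥ fun r => ∫ ω, kernelWeight k H (Pt₀ ω, Z₀ ω) (S ω) r * ytil ω ∂P := by
  have hV : Measurable fun ω => (Pt₀ ω, Z₀ ω) := hPt₀.prodMk hZ₀
  have hui : Integrable (fun ω => K * (‖Pt₀ ω‖ + C)) P :=
    (hPt₀i.norm.add (integrable_const C)).const_mul K
  have hindep_e : IndepFun (fun ω => (Pt₀ ω, Z₀ ω)) (fun ω => (S ω, e ω)) P :=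
    hindep.comp measurable_id (by fun_prop : Measurable fun q : _ × _ × ℝ => (q.1, q.2.2))
  have hw := measurable_kernelWeight hk hH
  have hwK := abs_kernelWeight_le hkK hHC
  refine eq_inv_mulVec_of_integral_mul_eq_zero hAinv hA hytil (fun r s => ?_) (fun r => ?_)
    (fun r => ?_)
  · exact hindep.integrable_mul_of_abs_le hV (hS.prodMk (hPt₁.prodMk he))
      (g := fun q => kernelWeight k H q.1 q.2.1 r) (by fun_prop) (by fun_prop)
      (fun b c => hwK b c.1 r) hui (h := fun c => c.2.1 s) (by fun_prop) (hPt₁i.eval s)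
  · exact hindep_e.integrable_mul_of_abs_le hV (hS.prodMk he)
      (g := fun q => kernelWeight k H q.1 q.2.1 r) (by fun_prop) (by fun_prop)
      (fun b c => hwK b c.1 r) hui (h := Prod.snd) measurable_snd hei
  · exact hindep_e.integral_mul_eq_zero_of_condExp_eq_zero hV hS he (hw r) (by fun_prop)
      (fun b c => hwK b c r) hui hei heS

end KernelWeight

theorem drsmd_identification_general
    {Ω : Type*} [MeasurableSpace Ω] (P : Measure Ω) [IsProbabilityMeasure P]
    {p qX qz : ℕ}
    (μ : Measure (Fin qz → ℝ)) [IsFiniteMeasure μ]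
    (k : (Fin qz → ℝ) → ℝ)
    (hk : ∀ u, (k u : ℂ) = ∫ t, Complex.exp (Complex.I * ((t ⬝ᵥ u : ℝ) : ℂ)) ∂μ)
    (θ₀ : Fin p → ℝ) (f : (Fin qX → ℝ) → ℝ) (hfmeas : Measurable f)
    (y : Fin 3 → Ω → ℝ) (Pv : Fin 3 → Ω → Fin p → ℝ)
    (X : Fin 3 → Ω → Fin qX → ℝ) (Z : Fin 3 → Ω → Fin qz → ℝ)
    (ε : Fin 3 → Ω → ℝ)
    (hymeas : ∀ i, Measurable (y i)) (hPmeas : ∀ i, Measurable (Pv i))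
    (hXmeas : ∀ i, Measurable (X i)) (hZmeas : ∀ i, Measurable (Z i))
    (hyL2 : ∀ i, MemLp (y i) 2 P) (hPL2 : ∀ i, MemLp (Pv i) 2 P)
    (hεint : ∀ i, Integrable (ε i) P)
    (hmodel : ∀ i ω, y i ω = Pv i ω ⬝ᵥ θ₀ + f (X i ω) + ε i ω)
    (hεcond : ∀ i, P[ε i | MeasurableSpace.comap (fun ω => (X i ω, Z i ω)) inferInstance]
        =ᵐ[P] 0)
    (hindep : iIndepFun
        (fun i ω => (y i ω, Pv i ω, X i ω, Z i ω)) P)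
    (gy : (Fin qX → ℝ) → ℝ) (gP : (Fin qX → ℝ) → Fin p → ℝ)
    (hgPmeas : Measurable gP)
    (hgy : ∀ i, (fun ω => gy (X i ω))
        =ᵐ[P] P[y i | MeasurableSpace.comap (X i) inferInstance])
    (hgP : ∀ i, (fun ω => gP (X i ω))
        =ᵐ[P] P[Pv i | MeasurableSpace.comap (X i) inferInstance])
    (ytil : Fin 3 → Ω → ℝ) (Ptil : Fin 3 → Ω → Fin p → ℝ)
    (hytil : ∀ i ω, ytil i ω = y i ω - gy (X i ω))
    (hPtil : ∀ i ω, Ptil i ω = Pv i ω - gP (X i ω))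
    (a : (Fin qX → ℝ) → Fin p → ℝ) (c : (Fin qX → ℝ) → ℝ)
    (hameas : Measurable a) (hcmeas : Measurable c)
    (H : (Fin qX → ℝ) → Fin p → ℝ) (hH : ∀ x, H x = (c x)⁻¹ • a x)
    (hHbdd : ∃ C, ∀ x, ‖H x‖ ≤ C)
    (A : Matrix (Fin p) (Fin p) ℝ)
    (hA : A = Matrix.of fun r s =>
        ∫ ω, k (Z 0 ω - Z 1 ω) * ((Ptil 0 ω r - H (X 1 ω) r) * Ptil 1 ω s) ∂P)
    (hAinv : IsUnit A.det) :
    θ₀ = A⁻¹.mulVec fun r =>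
        ∫ ω, k (Z 0 ω - Z 1 ω) * ((Ptil 0 ω r - H (X 1 ω) r) * ytil 1 ω) ∂P := by
  obtain ⟨C, hC⟩ := hHbdd
  have hkK : ∀ u, |k u| ≤ μ.real Set.univ := fun u => by
    rw [← Real.norm_eq_abs, ← Complex.norm_real, hk u]
    exact norm_integral_exp_I_mul_le μ _
  have hHm : Measurable H := by
    rw [funext hH]; exact hcmeas.inv.smul hameas
  have hPtm : ∀ i, Measurable (Ptil i) := fun i => by
    rw [funext (hPtil i)]; exact (hPmeas i).sub (hgPmeas.comp (hXmeas i))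
  have hPti : ∀ i, Integrable (Ptil i) P := fun i => by
    rw [funext (hPtil i)]
    exact ((hPL2 i).integrable one_le_two).sub (integrable_condExp.congr (hgP i).symm)
  have hε : ∀ i, ε i = fun ω => y i ω - Pv i ω ⬝ᵥ θ₀ - f (X i ω) := fun i => funext fun ω => by
    rw [hmodel i ω]; ring
  have hytil1 : ytil 1 =ᵐ[P] fun ω => Ptil 1 ω ⬝ᵥ θ₀ + ε 1 ω := by
    filter_upwards [sub_condExp_ae_eq_of_partiallyLinear hfmeas (hXmeas 1) (hZmeas 1)
      ((hyL2 1).integrable one_le_two) ((hPL2 1).integrable one_le_two) (hεint 1) (hmodel 1)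
      (hεcond 1), hgy 1, hgP 1] with ω h hy hP
    rw [hytil, hPtil, hy, hP, h]
  have hindep01 : IndepFun (fun ω => (Ptil 0 ω, Z 0 ω))
      (fun ω => ((X 1 ω, Z 1 ω), Ptil 1 ω, ε 1 ω)) P := by
    convert (hindep.indepFun (show (0 : Fin 3) ≠ 1 by decide)).comp
      (φ := fun d => (d.2.1 - gP d.2.2.1, d.2.2.2))
      (ψ := fun d => ((d.2.2.1, d.2.2.2), d.2.1 - gP d.2.2.1, d.1 - d.2.1 ⬝ᵥ θ₀ - f d.2.2.1))
      (by fun_prop) (by fun_prop) using 1 <;> funext ω <;> simp [hPtil, hε]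
  simp only [← mul_assoc] at hA ⊢
  exact eq_inv_mulVec_integral_kernelWeight_mul (measurable_of_ofReal_eq_integral_exp hk) hkK
    hHm hC (hPtm 0) (hPtm 1) (hZmeas 0) ((hXmeas 1).prodMk (hZmeas 1)) (by rw [hε 1]; fun_prop)
    (hPti 0) (hPti 1) (hεint 1) hindep01 (hεcond 1) hytil1 hA hAinv

/-- Identification of `θ₀` from the Neyman-orthogonalized first-order condition: with
three mutually independent observations `D_j, D_l, D_m` from the partially linear model,
if `A := E[k(Z_j − Z_l)(P̃_j − H(X_l)) P̃_lᵀ]` is invertible then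
`θ₀ = A⁻¹ · E[k(Z_j − Z_l)(P̃_j − H(X_l)) ỹ_l]`. -/
theorem drsmd_identification
    {Ω : Type*} [MeasurableSpace Ω] (P : Measure Ω) [IsProbabilityMeasure P]
    {p qX qz : ℕ}
    (μ : Measure (Fin qz → ℝ)) [IsFiniteMeasure μ]
    (hμsymm : μ.map (fun t => -t) = μ)
    (k : (Fin qz → ℝ) → ℝ)
    (hk : ∀ u, (k u : ℂ) = ∫ t, Complex.exp (Complex.I * ((t ⬝ᵥ u : ℝ) : ℂ)) ∂μ)
    (θ₀ : Fin p → ℝ) (f : (Fin qX → ℝ) → ℝ) (hfmeas : Measurable f)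
    (y : Fin 3 → Ω → ℝ) (Pv : Fin 3 → Ω → Fin p → ℝ)
    (X : Fin 3 → Ω → Fin qX → ℝ) (Z : Fin 3 → Ω → Fin qz → ℝ)
    (ε : Fin 3 → Ω → ℝ)
    (hymeas : ∀ i, Measurable (y i)) (hPmeas : ∀ i, Measurable (Pv i))
    (hXmeas : ∀ i, Measurable (X i)) (hZmeas : ∀ i, Measurable (Z i))
    (hyL2 : ∀ i, MemLp (y i) 2 P) (hPL2 : ∀ i, MemLp (Pv i) 2 P)
    (hXL2 : ∀ i, MemLp (X i) 2 P) (hZL2 : ∀ i, MemLp (Z i) 2 P)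
    (hεint : ∀ i, Integrable (ε i) P)
    (hmodel : ∀ i ω, y i ω = Pv i ω ⬝ᵥ θ₀ + f (X i ω) + ε i ω)
    (hεcond : ∀ i, P[ε i | MeasurableSpace.comap (fun ω => (X i ω, Z i ω)) inferInstance]
        =ᵐ[P] 0)
    (hindep : iIndepFun
        (fun i ω => (y i ω, Pv i ω, X i ω, Z i ω)) P)
    (hident : ∀ i j, IdentDistrib (fun ω => (y i ω, Pv i ω, X i ω, Z i ω))
        (fun ω => (y j ω, Pv j ω, X j ω, Z j ω)) P P)
    (gy : (Fin qX → ℝ) → ℝ) (gP : (Fin qX → ℝ) → Fin p → ℝ)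
    (hgymeas : Measurable gy) (hgPmeas : Measurable gP)
    (hgy : ∀ i, (fun ω => gy (X i ω))
        =ᵐ[P] P[y i | MeasurableSpace.comap (X i) inferInstance])
    (hgP : ∀ i, (fun ω => gP (X i ω))
        =ᵐ[P] P[Pv i | MeasurableSpace.comap (X i) inferInstance])
    (ytil : Fin 3 → Ω → ℝ) (Ptil : Fin 3 → Ω → Fin p → ℝ)
    (hytil : ∀ i ω, ytil i ω = y i ω - gy (X i ω))
    (hPtil : ∀ i ω, Ptil i ω = Pv i ω - gP (X i ω))
    (a : (Fin qX → ℝ) → Fin p → ℝ) (c : (Fin qX → ℝ) → ℝ)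
    (hameas : Measurable a) (hcmeas : Measurable c)
    (ha : (fun ω => a (X 1 ω)) =ᵐ[P]
        P[(fun ω => k (Z 2 ω - Z 1 ω) • Ptil 2 ω) |
          MeasurableSpace.comap (X 1) inferInstance])
    (hc : (fun ω => c (X 1 ω)) =ᵐ[P]
        P[(fun ω => k (Z 2 ω - Z 1 ω)) | MeasurableSpace.comap (X 1) inferInstance])
    (hcne : ∀ᵐ ω ∂P, c (X 1 ω) ≠ 0)
    (H : (Fin qX → ℝ) → Fin p → ℝ) (hH : ∀ x, H x = (c x)⁻¹ • a x)
    (hHbdd : ∃ C, ∀ x, ‖H x‖ ≤ C)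
    (A : Matrix (Fin p) (Fin p) ℝ)
    (hA : A = Matrix.of fun r s =>
        ∫ ω, k (Z 0 ω - Z 1 ω) * ((Ptil 0 ω r - H (X 1 ω) r) * Ptil 1 ω s) ∂P)
    (hAinv : IsUnit A.det) :
    θ₀ = A⁻¹.mulVec fun r =>
        ∫ ω, k (Z 0 ω - Z 1 ω) * ((Ptil 0 ω r - H (X 1 ω) r) * ytil 1 ω) ∂P :=
  drsmd_identification_general P μ k hk θ₀ f hfmeas y Pv X Z ε hymeas hPmeas hXmeas hZmeas hyL2 hPL2
    hεint hmodel hεcond hindep gy gP hgPmeas hgy hgP ytil Ptil hytil hPtil a c hameas hcmeas H hH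
    hHbdd A hA hAinv
end

section
/- Let (V, Z₁) and (ε, Z₂) be independent random elements on a probability space (Ω, 𝓕, P), with V : Ω → ℝ integrable, Z₁, Z₂ : Ω → ℝ^q, ε : Ω → ℝ integrable, and suppose E[ε | σ(Z₂)] = 0 almost surely. Then E[V · ε · k(Z₁ − Z₂)] = 0. (This is the vanishing of the term I₁ in the orthogonality analysis: a kernel-weighted cross-moment between a function of one observation and the error of an independent observation is zero under the conditional moment restriction.) -/
open MeasureTheory ProbabilityTheory Filter Topology Complex Matrix NNReal ENNReal

/-!
Freezing the first observation: by independence, the law of `((V, Z₁), (ε, Z₂))` is a product,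
so by Fubini the cross-moment is the average over `(v, z₁)` of `v · E[ε · k(z₁ - Z₂)]`. For fixed
`z₁` the weight `k(z₁ - Z₂)` is bounded and `σ(Z₂)`-measurable, so pulling it out of
`E[· | σ(Z₂)]` turns `E[ε · k(z₁ - Z₂)]` into `E[k(z₁ - Z₂) · E[ε | σ(Z₂)]] = 0`.
-/

section FourierKernel

variable {ι : Type*} [Fintype ι] (μ : Measure (ι → ℝ))

theorem measurable_integral_exp_I_mul_dotProduct [SFinite μ] :
    Measurable fun u : ι → ℝ => ∫ t, exp (I * ((t ⬝ᵥ u : ℝ) : ℂ)) ∂μ := by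
  have hcont : Continuous fun p : (ι → ℝ) × (ι → ℝ) => exp (I * ((p.2 ⬝ᵥ p.1 : ℝ) : ℂ)) := by
    fun_prop
  exact hcont.stronglyMeasurable.integral_prod_right'.measurable

theorem norm_integral_exp_I_mul_dotProduct_le [IsFiniteMeasure μ] (u : ι → ℝ) :
    ‖∫ t, exp (I * ((t ⬝ᵥ u : ℝ) : ℂ)) ∂μ‖ ≤ μ.real Set.univ := by
  simpa using norm_integral_le_of_norm_le_const (μ := μ) (C := 1) <| ae_of_all _ fun t => by
    rw [mul_comm, norm_exp_ofReal_mul_I]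

end FourierKernel

theorem integral_mul_eq_zero_of_condExp_eq_zero {Ω : Type*} {m mΩ : MeasurableSpace Ω}
    {P : Measure Ω} [IsFiniteMeasure P] (hm : m ≤ mΩ) {f g : Ω → ℝ}
    (hf : StronglyMeasurable[m] f) (c : ℝ) (hf_bound : ∀ᵐ ω ∂P, ‖f ω‖ ≤ c)
    (hg : Integrable g P) (hcond : P[g | m] =ᵐ[P] 0) :
    ∫ ω, f ω * g ω ∂P = 0 := by
  have hpull : P[f * g | m] =ᵐ[P] 0 := by
    filter_upwards [condExp_stronglyMeasurable_mul_of_bound hm hf hg c hf_bound, hcond]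
      with ω hω hω₀
    simp [hω, hω₀]
  calc ∫ ω, f ω * g ω ∂P = ∫ ω, P[f * g | m] ω ∂P := (integral_condExp hm).symm
    _ = 0 := by rw [integral_congr_ae hpull, integral_zero']

theorem ProbabilityTheory.IndepFun.integral_comp_eq_integral_integral_comp
    {Ω α β E : Type*} [MeasurableSpace Ω] [MeasurableSpace α] [MeasurableSpace β]
    [NormedAddCommGroup E] [NormedSpace ℝ E]
    {P : Measure Ω} [IsFiniteMeasure P] {X : Ω → α} {Y : Ω → β} (hXY : IndepFun X Y P)
    (hX : AEMeasurable X P) (hY : AEMeasurable Y P) {H : α × β → E} (hH : StronglyMeasurable H)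
    (hint : Integrable (fun ω => H (X ω, Y ω)) P) :
    ∫ ω, H (X ω, Y ω) ∂P = ∫ x, ∫ ω, H (x, Y ω) ∂P ∂(P.map X) := by
  have hmap := hXY.map_prod_eq_prod_map_map hX hY
  have hint' : Integrable H ((P.map X).prod (P.map Y)) := by
    rwa [← hmap, integrable_map_measure hH.aestronglyMeasurable (hX.prodMk hY)]
  rw [← integral_map (hX.prodMk hY) hH.aestronglyMeasurable, hmap, integral_prod H hint']
  congr 1 with x
  exact integral_map hY (hH.comp_measurable measurable_prodMk_left).aestronglyMeasurable

theorem kernel_cross_moment_vanishes_general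
    {Ω : Type*} [MeasurableSpace Ω] (P : Measure Ω) [IsProbabilityMeasure P]
    {q : ℕ} (μ : Measure (Fin q → ℝ)) [IsFiniteMeasure μ]
    (k : (Fin q → ℝ) → ℝ)
    (hk : ∀ u, (k u : ℂ) = ∫ t, Complex.exp (Complex.I * ((t ⬝ᵥ u : ℝ) : ℂ)) ∂μ)
    (V ε : Ω → ℝ) (Z₁ Z₂ : Ω → Fin q → ℝ)
    (hZ₁meas : Measurable Z₁) (hZ₂meas : Measurable Z₂)
    (hVint : Integrable V P) (hεint : Integrable ε P)
    (hindep : IndepFun (fun ω => (V ω, Z₁ ω)) (fun ω => (ε ω, Z₂ ω)) P)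
    (hcond : P[ε | MeasurableSpace.comap Z₂ inferInstance] =ᵐ[P] 0) :
    ∫ ω, V ω * ε ω * k (Z₁ ω - Z₂ ω) ∂P = 0 := by
  have hk_meas : Measurable k := by
    simpa [← hk, Function.comp_def] using
      measurable_re.comp (measurable_integral_exp_I_mul_dotProduct μ)
  have hk_bdd (u) : ‖k u‖ ≤ μ.real Set.univ := by
    simpa [← hk] using norm_integral_exp_I_mul_dotProduct_le μ u
  have hint : Integrable (fun ω => V ω * ε ω * k (Z₁ ω - Z₂ ω)) P :=
    ((hindep.comp measurable_fst measurable_fst).integrable_mul hVint hεint).mul_bdd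
      (hk_meas.comp (hZ₁meas.sub hZ₂meas)).aestronglyMeasurable (ae_of_all _ fun ω => hk_bdd _)
  have hH : Measurable fun p : (ℝ × (Fin q → ℝ)) × (ℝ × (Fin q → ℝ)) =>
      p.1.1 * p.2.1 * k (p.1.2 - p.2.2) := by fun_prop
  rw [hindep.integral_comp_eq_integral_integral_comp
    (hVint.aemeasurable.prodMk hZ₁meas.aemeasurable)
    (hεint.aemeasurable.prodMk hZ₂meas.aemeasurable) hH.stronglyMeasurable hint]
  have hZ₂ : Measurable[MeasurableSpace.comap Z₂ inferInstance] Z₂ := comap_measurable Z₂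
  suffices ∀ z₁, ∫ ω, k (z₁ - Z₂ ω) * ε ω ∂P = 0 by
    simp_rw [mul_assoc, integral_const_mul, mul_comm (ε _), this, mul_zero, integral_zero]
  intro z₁
  exact integral_mul_eq_zero_of_condExp_eq_zero hZ₂meas.comap_le
    (hk_meas.comp (measurable_const.sub hZ₂)).stronglyMeasurable _ (ae_of_all _ fun ω => hk_bdd _)
    hεint hcond

/-- Vanishing of the term `I₁`: a kernel-weighted cross-moment between a function of one
observation and the error of an independent observation is zero under the conditional
moment restriction `E[ε | σ(Z₂)] = 0`. -/
theorem kernel_cross_moment_vanishes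
    {Ω : Type*} [MeasurableSpace Ω] (P : Measure Ω) [IsProbabilityMeasure P]
    {q : ℕ} (μ : Measure (Fin q → ℝ)) [IsFiniteMeasure μ]
    (hμsymm : μ.map (fun t => -t) = μ)
    (k : (Fin q → ℝ) → ℝ)
    (hk : ∀ u, (k u : ℂ) = ∫ t, Complex.exp (Complex.I * ((t ⬝ᵥ u : ℝ) : ℂ)) ∂μ)
    (V ε : Ω → ℝ) (Z₁ Z₂ : Ω → Fin q → ℝ)
    (hVmeas : Measurable V) (hεmeas : Measurable ε)
    (hZ₁meas : Measurable Z₁) (hZ₂meas : Measurable Z₂)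
    (hVint : Integrable V P) (hεint : Integrable ε P)
    (hindep : IndepFun (fun ω => (V ω, Z₁ ω)) (fun ω => (ε ω, Z₂ ω)) P)
    (hcond : P[ε | MeasurableSpace.comap Z₂ inferInstance] =ᵐ[P] 0) :
    ∫ ω, V ω * ε ω * k (Z₁ ω - Z₂ ω) ∂P = 0 :=
  kernel_cross_moment_vanishes_general P μ k hk V ε Z₁ Z₂ hZ₁meas hZ₂meas hVint hεint hindep hcond
end

section
/- Let (V_j, Z_j) and (V_l, Z_l) be two independent, identically distributed random pairs with V : Ω → ℝ^p integrable (p ≥ 2) and Z : Ω → ℝ^q. Suppose there exist a measurable function φ : ℝ^q → ℝ and a fixed vector c ∈ ℝ^p such that E[V | σ(Z)] = φ(Z) · c almost surely (componentwise). Then the p×p matrix M := E[k(Z_j − Z_l) V_j V_lᵀ] is singular (not invertible). In particular, if p = 2, Z is real-valued and E[V | σ(Z)] = (π₁ Z, π₂ Z) almost surely for constants π₁, π₂, then M is singular, so the SMD moment matrix of a linear first stage with a single instrument cannot identify two parameters. -/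
/-!
Conditioning on `Z_j` and pulling out the bounded `σ(Z_j)`-measurable factor `k (Z_j - z)` gives
`E[k (Z_j - z) V_j] = E[k (Z_j - z) φ (Z_j)] • c =: g z • c` for every `z`. Independence of the
two pairs lets one integrate out the `j`-copy first, so `M = c wᵀ` with `w = E[g (Z_l) V_l]`:
a matrix of rank at most one, hence singular once `p ≥ 2`.
-/

open MeasureTheory ProbabilityTheory Filter Complex Matrix

section FourierTransform

variable {ι : Type*} [Fintype ι] (μ : Measure (ι → ℝ)) {k : (ι → ℝ) → ℝ}

lemma measurable_of_ofReal_eq_integral_cexp [SFinite μ]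
    (hk : ∀ u, (k u : ℂ) = ∫ t, cexp (I * ((t ⬝ᵥ u : ℝ) : ℂ)) ∂μ) : Measurable k := by
  have hk_re : k = fun u => (∫ t, cexp (I * ((t ⬝ᵥ u : ℝ) : ℂ)) ∂μ).re := by
    funext u
    rw [← hk u, ofReal_re]
  have hdot : Measurable fun x : (ι → ℝ) × (ι → ℝ) => x.2 ⬝ᵥ x.1 := by
    simp only [dotProduct]
    fun_prop
  rw [hk_re]
  exact measurable_re.comp (StronglyMeasurable.integral_prod_right'
    (f := fun x : (ι → ℝ) × (ι → ℝ) => cexp (I * ((x.2 ⬝ᵥ x.1 : ℝ) : ℂ)))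
    (by fun_prop : Measurable _).stronglyMeasurable).measurable

lemma abs_le_of_ofReal_eq_integral_cexp [IsFiniteMeasure μ]
    (hk : ∀ u, (k u : ℂ) = ∫ t, cexp (I * ((t ⬝ᵥ u : ℝ) : ℂ)) ∂μ) (u : ι → ℝ) :
    |k u| ≤ μ.real Set.univ := by
  rw [← Real.norm_eq_abs, ← norm_real, hk u]
  simpa using norm_integral_le_of_norm_le_const (μ := μ) (C := 1)
    (Eventually.of_forall fun t => by simp [norm_exp])

end FourierTransform

section Probability

variable {Ω : Type*} [MeasurableSpace Ω] {P : Measure Ω} [IsFiniteMeasure P]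

lemma integral_comp_mul_eq_of_condExp_eq {β : Type*} [MeasurableSpace β]
    {Z : Ω → β} (hZ : Measurable Z) {h : β → ℝ} (hh : Measurable h) {C : ℝ}
    (hb : ∀ z, |h z| ≤ C) {X : Ω → ℝ} (hX : Integrable X P) {ψ : β → ℝ}
    (hcond : P[X | MeasurableSpace.comap Z inferInstance] =ᵐ[P] fun ω => ψ (Z ω)) :
    ∫ ω, h (Z ω) * X ω ∂P = ∫ ω, h (Z ω) * ψ (Z ω) ∂P := by
  have hhZ : StronglyMeasurable[MeasurableSpace.comap Z inferInstance] (h ∘ Z) :=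
    (hh.comp (comap_measurable Z)).stronglyMeasurable
  have hint : Integrable ((h ∘ Z) * X) P :=
    hX.bdd_mul (hh.comp hZ).aestronglyMeasurable (Eventually.of_forall fun ω => hb (Z ω))
  calc ∫ ω, h (Z ω) * X ω ∂P
      = ∫ ω, (P[(h ∘ Z) * X | MeasurableSpace.comap Z inferInstance]) ω ∂P :=
        (integral_condExp hZ.comap_le).symm
    _ = ∫ ω, h (Z ω) * ψ (Z ω) ∂P := by
        refine integral_congr_ae ?_
        filter_upwards [condExp_mul_of_stronglyMeasurable_left hhZ hint hX, hcond]
          with ω hpull hω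
        rw [hpull, Pi.mul_apply, hω, Function.comp_apply]

lemma integral_comp_mul_apply_eq_of_condExp_eq_smul {ι β : Type*} [Fintype ι]
    [MeasurableSpace β] {Z : Ω → β} (hZ : Measurable Z) {h : β → ℝ} (hh : Measurable h)
    {C : ℝ} (hb : ∀ z, |h z| ≤ C) {V : Ω → ι → ℝ} (hV : Integrable V P) {φ : β → ℝ}
    {c : ι → ℝ} (hcond : P[V | MeasurableSpace.comap Z inferInstance] =ᵐ[P] fun ω => φ (Z ω) • c)
    (i : ι) : ∫ ω, h (Z ω) * V ω i ∂P = (∫ ω, h (Z ω) * φ (Z ω) ∂P) * c i := by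
  have hcond_i : P[fun ω => V ω i | MeasurableSpace.comap Z inferInstance]
      =ᵐ[P] fun ω => φ (Z ω) * c i := by
    refine ((ContinuousLinearMap.proj i).comp_condExp_comm hV).symm.trans ?_
    filter_upwards [hcond] with ω hω
    simp [hω]
  rw [integral_comp_mul_eq_of_condExp_eq (ψ := fun z => φ z * c i) hZ hh hb (hV.eval i) hcond_i,
    ← integral_mul_const]
  simp_rw [mul_assoc]

lemma ProbabilityTheory.IndepFun.integral_comp_eq_integral_integral
    {α β : Type*} [MeasurableSpace α] [MeasurableSpace β] {X : Ω → α} {Y : Ω → β}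
    (hXY : IndepFun X Y P) (hX : AEMeasurable X P) (hY : AEMeasurable Y P)
    {F : α × β → ℝ} (hFm : StronglyMeasurable F)
    (hF : Integrable (fun ω => F (X ω, Y ω)) P) :
    ∫ ω, F (X ω, Y ω) ∂P = ∫ ω', ∫ ω, F (X ω, Y ω') ∂P ∂P := by
  have hXYm : AEMeasurable (fun ω => (X ω, Y ω)) P := hX.prodMk hY
  have hlaw : P.map (fun ω => (X ω, Y ω)) = (P.map X).prod (P.map Y) :=
    (indepFun_iff_map_prod_eq_prod_map_map hX hY).mp hXY
  have hFint : Integrable F ((P.map X).prod (P.map Y)) := by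
    rw [← hlaw]
    exact (integrable_map_measure hFm.aestronglyMeasurable hXYm).mpr hF
  calc ∫ ω, F (X ω, Y ω) ∂P
      = ∫ w, F w ∂((P.map X).prod (P.map Y)) := by
        rw [← hlaw, integral_map hXYm hFm.aestronglyMeasurable]
    _ = ∫ y, ∫ x, F (x, y) ∂(P.map X) ∂(P.map Y) := integral_prod_symm F hFint
    _ = ∫ ω', ∫ ω, F (X ω, Y ω') ∂P ∂P := by
        rw [integral_map hY hFm.integral_prod_left'.aestronglyMeasurable]
        congr 1 with ω'
        exact integral_map hX (hFm.comp_measurable measurable_prodMk_right).aestronglyMeasurable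

lemma integral_comp_sub_mul_mul_eq_integral_integral_of_iid {ι β : Type*} [Fintype ι]
    [MeasurableSpace β] [AddGroup β] [MeasurableSub₂ β] {V V' : Ω → ι → ℝ} {Z Z' : Ω → β}
    (hindep : IndepFun (fun ω => (V ω, Z ω)) (fun ω => (V' ω, Z' ω)) P)
    (hident : IdentDistrib (fun ω => (V ω, Z ω)) (fun ω => (V' ω, Z' ω)) P P)
    (hV : Integrable V P) {k : β → ℝ} (hk : Measurable k) {C : ℝ} (hkb : ∀ z, |k z| ≤ C)
    (i j : ι) :
    ∫ ω, k (Z ω - Z' ω) * (V ω i * V' ω j) ∂P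
      = ∫ ω', (∫ ω, k (Z ω - Z' ω') * V ω i ∂P) * V' ω' j ∂P := by
  have hV' : Integrable V' P := (hident.comp measurable_fst).integrable_iff.mp hV
  have hindep_ij : IndepFun (fun ω => V ω i) (fun ω => V' ω j) P :=
    hindep.comp (φ := fun x : (ι → ℝ) × β => x.1 i) (ψ := fun y : (ι → ℝ) × β => y.1 j)
      (by fun_prop) (by fun_prop)
  have hZZ' : AEMeasurable (fun ω => Z ω - Z' ω) P :=
    (measurable_snd.comp_aemeasurable hident.aemeasurable_fst).sub
      (measurable_snd.comp_aemeasurable hident.aemeasurable_snd)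
  have hint : Integrable (fun ω => k (Z ω - Z' ω) * (V ω i * V' ω j)) P :=
    (hindep_ij.integrable_mul (hV.eval i) (hV'.eval j)).bdd_mul
      (hk.comp_aemeasurable hZZ').aestronglyMeasurable (Eventually.of_forall fun ω => hkb _)
  rw [hindep.integral_comp_eq_integral_integral hident.aemeasurable_fst hident.aemeasurable_snd
    (F := fun w => k (w.1.2 - w.2.2) * (w.1.1 i * w.2.1 j)) (by fun_prop) hint]
  congr 1 with ω'
  simp_rw [← mul_assoc, integral_mul_const]

end Probability

lemma Matrix.not_isUnit_vecMulVec {n K : Type*} [Fintype n] [DecidableEq n] [Field K]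
    (hn : 1 < Fintype.card n) (u v : n → K) : ¬ IsUnit (vecMulVec u v) := fun hunit => by
  have := rank_vecMulVec_le u v
  rw [rank_of_isUnit _ hunit] at this
  omega

theorem smd_matrix_singular_of_proportional_first_stage_general
    {Ω : Type*} [MeasurableSpace Ω] (P : Measure Ω) [IsProbabilityMeasure P]
    {p q : ℕ} (hp : 2 ≤ p)
    (μ : Measure (Fin q → ℝ)) [IsFiniteMeasure μ]
    (k : (Fin q → ℝ) → ℝ)
    (hk : ∀ u, (k u : ℂ) = ∫ t, Complex.exp (Complex.I * ((t ⬝ᵥ u : ℝ) : ℂ)) ∂μ)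
    (Vj Vl : Ω → Fin p → ℝ) (Zj Zl : Ω → Fin q → ℝ)
    (hZjmeas : Measurable Zj)
    (hVint : Integrable Vj P)
    (hindep : IndepFun (fun ω => (Vj ω, Zj ω)) (fun ω => (Vl ω, Zl ω)) P)
    (hident : IdentDistrib (fun ω => (Vj ω, Zj ω)) (fun ω => (Vl ω, Zl ω)) P P)
    (φ : (Fin q → ℝ) → ℝ) (c : Fin p → ℝ)
    (hcond : P[Vj | MeasurableSpace.comap Zj inferInstance]
        =ᵐ[P] fun ω => φ (Zj ω) • c)
    (M : Matrix (Fin p) (Fin p) ℝ)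
    (hM : M = Matrix.of fun i j => ∫ ω, k (Zj ω - Zl ω) * (Vj ω i * Vl ω j) ∂P) :
    ¬ IsUnit M := by
  have hkm : Measurable k := measurable_of_ofReal_eq_integral_cexp μ hk
  have hkb := abs_le_of_ofReal_eq_integral_cexp μ hk
  set g : (Fin q → ℝ) → ℝ := fun z => ∫ ω, k (Zj ω - z) * φ (Zj ω) ∂P
  suffices M = vecMulVec c fun j => ∫ ω', g (Zl ω') * Vl ω' j ∂P from
    this ▸ not_isUnit_vecMulVec ((Fintype.card_fin p).symm ▸ hp) _ _
  ext i j
  rw [hM, of_apply, vecMulVec_apply, ← integral_const_mul,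
    integral_comp_sub_mul_mul_eq_integral_integral_of_iid hindep hident hVint hkm hkb]
  congr 1 with ω'
  rw [integral_comp_mul_apply_eq_of_condExp_eq_smul (h := fun z => k (z - Zl ω')) hZjmeas
    (hkm.comp (measurable_id.sub_const _)) (fun z => hkb _) hVint hcond i]
  ring

/-- If `p ≥ 2` and the conditional mean of `V` given `Z` is proportional to a fixed
vector, `E[V | σ(Z)] = φ(Z) · c` a.s., then the SMD moment matrix
`M := E[k(Z_j − Z_l) V_j V_lᵀ]` is singular: a linear first stage with a single
instrument cannot identify two parameters. -/
theorem smd_matrix_singular_of_proportional_first_stage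
    {Ω : Type*} [MeasurableSpace Ω] (P : Measure Ω) [IsProbabilityMeasure P]
    {p q : ℕ} (hp : 2 ≤ p)
    (μ : Measure (Fin q → ℝ)) [IsFiniteMeasure μ]
    (hμsymm : μ.map (fun t => -t) = μ)
    (k : (Fin q → ℝ) → ℝ)
    (hk : ∀ u, (k u : ℂ) = ∫ t, Complex.exp (Complex.I * ((t ⬝ᵥ u : ℝ) : ℂ)) ∂μ)
    (Vj Vl : Ω → Fin p → ℝ) (Zj Zl : Ω → Fin q → ℝ)
    (hVjmeas : Measurable Vj) (hVlmeas : Measurable Vl)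
    (hZjmeas : Measurable Zj) (hZlmeas : Measurable Zl)
    (hVint : Integrable Vj P)
    (hindep : IndepFun (fun ω => (Vj ω, Zj ω)) (fun ω => (Vl ω, Zl ω)) P)
    (hident : IdentDistrib (fun ω => (Vj ω, Zj ω)) (fun ω => (Vl ω, Zl ω)) P P)
    (φ : (Fin q → ℝ) → ℝ) (hφmeas : Measurable φ) (c : Fin p → ℝ)
    (hcond : P[Vj | MeasurableSpace.comap Zj inferInstance]
        =ᵐ[P] fun ω => φ (Zj ω) • c)
    (M : Matrix (Fin p) (Fin p) ℝ)
    (hM : M = Matrix.of fun i j => ∫ ω, k (Zj ω - Zl ω) * (Vj ω i * Vl ω j) ∂P) :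
    ¬ IsUnit M :=
  smd_matrix_singular_of_proportional_first_stage_general P hp μ k hk Vj Vl Zj Zl hZjmeas hVint
    hindep hident φ c hcond M hM
end

section
/- Let (U, Z_j) and (V, Z_l) be independent random pairs on a probability space (Ω, 𝓕, P), where U, V : Ω → ℝ are integrable and Z_j, Z_l take values in {0,1} with P(Z_j = 1) = P(Z_l = 1) = b for some b ∈ (0,1). Fix a ∈ ℝ and define the weight k̃(z, z′) := 1 if z = z′ and k̃(z, z′) := a if z ≠ z′. Write u₁ := E[U | Z_j = 1], u₀ := E[U | Z_j = 0], v₁ := E[V | Z_l = 1], v₀ := E[V | Z_l = 0] (conditional expectations given the events). If E[V] = 0, then E[k̃(Z_j, Z_l) · U · V] = (1 − a)(u₁ v₁ b² + u₀ v₀ (1 − b)²). -/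
open MeasureTheory ProbabilityTheory Filter Topology Complex Matrix NNReal ENNReal

/-!
Since `Z_j, Z_l ∈ {0,1}`, the weight splits as
`k̃(Z_j, Z_l) = a + (1 - a) (1{Z_j = 1} 1{Z_l = 1} + 1{Z_j = 0} 1{Z_l = 0})`.
Independence of the pairs factorises each of the three resulting moments: the `a`-term gives
`a E[U] E[V] = 0`, and `E[U 1{Z_j = z}] E[V 1{Z_l = z}] = u_z v_z P(Z_j = z) P(Z_l = z)`.
-/

section IndependentPairs

variable {Ω β : Type*} [MeasurableSpace Ω] [MeasurableSpace β] {P : Measure Ω}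
  {U V : Ω → ℝ} {Zj Zl : Ω → β}

lemma indepFun_indicator_preimage
    (hindep : IndepFun (fun ω => (U ω, Zj ω)) (fun ω => (V ω, Zl ω)) P)
    {s t : Set β} (hs : MeasurableSet s) (ht : MeasurableSet t) :
    IndepFun ((Zj ⁻¹' s).indicator U) ((Zl ⁻¹' t).indicator V) P :=
  hindep.comp (measurable_fst.indicator (measurable_snd hs))
    (measurable_fst.indicator (measurable_snd ht))

lemma integral_indicator_mul_indicator_of_indepFun
    (hindep : IndepFun (fun ω => (U ω, Zj ω)) (fun ω => (V ω, Zl ω)) P)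
    (hU : Integrable U P) (hV : Integrable V P) (hZj : Measurable Zj) (hZl : Measurable Zl)
    {s t : Set β} (hs : MeasurableSet s) (ht : MeasurableSet t) :
    ∫ ω, (Zj ⁻¹' s).indicator U ω * (Zl ⁻¹' t).indicator V ω ∂P
      = (∫ ω in Zj ⁻¹' s, U ω ∂P) * ∫ ω in Zl ⁻¹' t, V ω ∂P := by
  rw [(indepFun_indicator_preimage hindep hs ht).integral_fun_mul_eq_mul_integral
      (hU.indicator (hZj hs)).1 (hV.indicator (hZl ht)).1,
    integral_indicator (hZj hs), integral_indicator (hZl ht)]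

end IndependentPairs

lemma binaryKernel_mul_mul_eq {z z' : ℝ} (hz : z = 0 ∨ z = 1) (hz' : z' = 0 ∨ z' = 1)
    (a u v : ℝ) :
    (if z = z' then 1 else a) * u * v
      = a * (u * v) + (1 - a) * ((if z = 1 then u else 0) * (if z' = 1 then v else 0)
        + (if z = 0 then u else 0) * (if z' = 0 then v else 0)) := by
  rcases hz with rfl | rfl <;> rcases hz' with rfl | rfl <;> norm_num <;> ring

lemma probReal_setOf_eq_zero_of_binary {Ω : Type*} [MeasurableSpace Ω] (P : Measure Ω)
    [IsProbabilityMeasure P] {Z : Ω → ℝ} (hZ : Measurable Z) (hZval : ∀ ω, Z ω = 0 ∨ Z ω = 1) :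
    P.real {ω | Z ω = 0} = 1 - P.real {ω | Z ω = 1} := by
  have hcompl : {ω | Z ω = 0} = {ω | Z ω = 1}ᶜ := by
    ext ω
    rcases hZval ω with h | h <;> simp [h]
  rw [hcompl]
  exact probReal_compl_eq_one_sub (hZ (measurableSet_singleton 1))

lemma integral_binaryKernel_mul_mul {Ω : Type*} [MeasurableSpace Ω] {P : Measure Ω}
    {U V Zj Zl : Ω → ℝ}
    (hindep : IndepFun (fun ω => (U ω, Zj ω)) (fun ω => (V ω, Zl ω)) P)
    (hU : Integrable U P) (hV : Integrable V P) (hZj : Measurable Zj) (hZl : Measurable Zl)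
    (hZjval : ∀ ω, Zj ω = 0 ∨ Zj ω = 1) (hZlval : ∀ ω, Zl ω = 0 ∨ Zl ω = 1) (a : ℝ) :
    ∫ ω, (if Zj ω = Zl ω then (1 : ℝ) else a) * U ω * V ω ∂P
      = a * ((∫ ω, U ω ∂P) * ∫ ω, V ω ∂P)
        + (1 - a) * ((∫ ω in {ω | Zj ω = 1}, U ω ∂P) * (∫ ω in {ω | Zl ω = 1}, V ω ∂P)
          + (∫ ω in {ω | Zj ω = 0}, U ω ∂P) * ∫ ω in {ω | Zl ω = 0}, V ω ∂P) := by
  have hUV : IndepFun U V P := hindep.comp measurable_fst measurable_fst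
  have hI1 : Integrable (fun ω => (Zj ⁻¹' {1}).indicator U ω * (Zl ⁻¹' {1}).indicator V ω) P :=
    (indepFun_indicator_preimage hindep (measurableSet_singleton 1)
      (measurableSet_singleton 1)).integrable_mul
      (hU.indicator (hZj (measurableSet_singleton 1)))
      (hV.indicator (hZl (measurableSet_singleton 1)))
  have hI0 : Integrable (fun ω => (Zj ⁻¹' {0}).indicator U ω * (Zl ⁻¹' {0}).indicator V ω) P :=
    (indepFun_indicator_preimage hindep (measurableSet_singleton 0)
      (measurableSet_singleton 0)).integrable_mul
      (hU.indicator (hZj (measurableSet_singleton 0)))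
      (hV.indicator (hZl (measurableSet_singleton 0)))
  calc ∫ ω, (if Zj ω = Zl ω then (1 : ℝ) else a) * U ω * V ω ∂P
      = ∫ ω, a * (U ω * V ω) + (1 - a) *
          ((Zj ⁻¹' {1}).indicator U ω * (Zl ⁻¹' {1}).indicator V ω
            + (Zj ⁻¹' {0}).indicator U ω * (Zl ⁻¹' {0}).indicator V ω) ∂P := by
        congr 1 with ω
        exact binaryKernel_mul_mul_eq (hZjval ω) (hZlval ω) a (U ω) (V ω)
    _ = _ := by
        have hIa : Integrable (fun ω => a * (U ω * V ω)) P := (hUV.integrable_mul hU hV).const_mul a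
        have hI10 : Integrable (fun ω => (1 - a) *
            ((Zj ⁻¹' {1}).indicator U ω * (Zl ⁻¹' {1}).indicator V ω
              + (Zj ⁻¹' {0}).indicator U ω * (Zl ⁻¹' {0}).indicator V ω)) P :=
          (hI1.add hI0).const_mul _
        rw [integral_add hIa hI10,
          integral_const_mul, integral_const_mul, integral_add hI1 hI0,
          hUV.integral_fun_mul_eq_mul_integral hU.1 hV.1,
          integral_indicator_mul_indicator_of_indepFun hindep hU hV hZj hZl
            (measurableSet_singleton 1) (measurableSet_singleton 1),
          integral_indicator_mul_indicator_of_indepFun hindep hU hV hZj hZl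
            (measurableSet_singleton 0) (measurableSet_singleton 0)]
        rfl

theorem binary_instrument_kernel_moment_general
    {Ω : Type*} [MeasurableSpace Ω] (P : Measure Ω) [IsProbabilityMeasure P]
    (U V : Ω → ℝ) (Zj Zl : Ω → ℝ)
    (hZjmeas : Measurable Zj) (hZlmeas : Measurable Zl)
    (hUint : Integrable U P) (hVint : Integrable V P)
    (hZjval : ∀ ω, Zj ω = 0 ∨ Zj ω = 1) (hZlval : ∀ ω, Zl ω = 0 ∨ Zl ω = 1)
    (b : ℝ) (hb0 : 0 < b) (hb1 : b < 1)
    (hbj : P {ω | Zj ω = 1} = ENNReal.ofReal b)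
    (hbl : P {ω | Zl ω = 1} = ENNReal.ofReal b)
    (hindep : IndepFun (fun ω => (U ω, Zj ω)) (fun ω => (V ω, Zl ω)) P)
    (a : ℝ)
    (hVmean : ∫ ω, V ω ∂P = 0)
    (u₁ u₀ v₁ v₀ : ℝ)
    (hu₁ : u₁ = (∫ ω in {ω | Zj ω = 1}, U ω ∂P) / (P {ω | Zj ω = 1}).toReal)
    (hu₀ : u₀ = (∫ ω in {ω | Zj ω = 0}, U ω ∂P) / (P {ω | Zj ω = 0}).toReal)
    (hv₁ : v₁ = (∫ ω in {ω | Zl ω = 1}, V ω ∂P) / (P {ω | Zl ω = 1}).toReal)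
    (hv₀ : v₀ = (∫ ω in {ω | Zl ω = 0}, V ω ∂P) / (P {ω | Zl ω = 0}).toReal) :
    ∫ ω, (if Zj ω = Zl ω then (1 : ℝ) else a) * U ω * V ω ∂P
      = (1 - a) * (u₁ * v₁ * b ^ 2 + u₀ * v₀ * (1 - b) ^ 2) := by
  have hPj1 : (P {ω | Zj ω = 1}).toReal = b := by rw [hbj, ENNReal.toReal_ofReal hb0.le]
  have hPl1 : (P {ω | Zl ω = 1}).toReal = b := by rw [hbl, ENNReal.toReal_ofReal hb0.le]
  have hPj0 : (P {ω | Zj ω = 0}).toReal = 1 - b := by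
    rw [← measureReal_def, probReal_setOf_eq_zero_of_binary P hZjmeas hZjval, measureReal_def,
      hPj1]
  have hPl0 : (P {ω | Zl ω = 0}).toReal = 1 - b := by
    rw [← measureReal_def, probReal_setOf_eq_zero_of_binary P hZlmeas hZlval, measureReal_def,
      hPl1]
  have hb1' : 1 - b ≠ 0 := sub_ne_zero.2 hb1.ne'
  rw [integral_binaryKernel_mul_mul hindep hUint hVint hZjmeas hZlmeas hZjval hZlval a, hVmean,
    hu₁, hu₀, hv₁, hv₀, hPj1, hPj0, hPl1, hPl0]
  field_simp
  ring

/-- Kernel-weighted cross moment with a binary instrument: for independent pairs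
`(U, Z_j)` and `(V, Z_l)` with `Z` valued in `{0,1}`, `P(Z=1) = b`, weight
`k̃(z,z') = 1` if `z = z'` and `a` otherwise, and `E[V] = 0`:
`E[k̃(Z_j,Z_l) U V] = (1−a)(u₁v₁b² + u₀v₀(1−b)²)`, where `u_z := E[U | Z_j = z]` etc. -/
theorem binary_instrument_kernel_moment
    {Ω : Type*} [MeasurableSpace Ω] (P : Measure Ω) [IsProbabilityMeasure P]
    (U V : Ω → ℝ) (Zj Zl : Ω → ℝ)
    (hUmeas : Measurable U) (hVmeas : Measurable V)
    (hZjmeas : Measurable Zj) (hZlmeas : Measurable Zl)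
    (hUint : Integrable U P) (hVint : Integrable V P)
    (hZjval : ∀ ω, Zj ω = 0 ∨ Zj ω = 1) (hZlval : ∀ ω, Zl ω = 0 ∨ Zl ω = 1)
    (b : ℝ) (hb0 : 0 < b) (hb1 : b < 1)
    (hbj : P {ω | Zj ω = 1} = ENNReal.ofReal b)
    (hbl : P {ω | Zl ω = 1} = ENNReal.ofReal b)
    (hindep : IndepFun (fun ω => (U ω, Zj ω)) (fun ω => (V ω, Zl ω)) P)
    (a : ℝ)
    (hVmean : ∫ ω, V ω ∂P = 0)
    (u₁ u₀ v₁ v₀ : ℝ)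
    (hu₁ : u₁ = (∫ ω in {ω | Zj ω = 1}, U ω ∂P) / (P {ω | Zj ω = 1}).toReal)
    (hu₀ : u₀ = (∫ ω in {ω | Zj ω = 0}, U ω ∂P) / (P {ω | Zj ω = 0}).toReal)
    (hv₁ : v₁ = (∫ ω in {ω | Zl ω = 1}, V ω ∂P) / (P {ω | Zl ω = 1}).toReal)
    (hv₀ : v₀ = (∫ ω in {ω | Zl ω = 0}, V ω ∂P) / (P {ω | Zl ω = 0}).toReal) :
    ∫ ω, (if Zj ω = Zl ω then (1 : ℝ) else a) * U ω * V ω ∂P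
      = (1 - a) * (u₁ * v₁ * b ^ 2 + u₀ * v₀ * (1 - b) ^ 2) :=
  binary_instrument_kernel_moment_general P U V Zj Zl hZjmeas hZlmeas hUint hVint hZjval hZlval b
    hb0 hb1 hbj hbl hindep a hVmean u₁ u₀ v₁ v₀ hu₁ hu₀ hv₁ hv₀
end

section
/- Let (W̃_j, X_j, Z_j) and (W̃_l, X_l, Z_l) be two independent, identically distributed random tuples with W̃ : Ω → ℝ and W̃·X : Ω → ℝ integrable, X real-valued, Z taking values in {0,1} with P(Z = 1) = b ∈ (0,1), and suppose E[W̃ | σ(X)] = 0 almost surely. Fix a ∈ ℝ and define k̃(z, z′) := 1 if z = z′ and a otherwise. Set θ₁ := E[W̃ | Z = 1], θ₂ := E[W̃ | Z = 0], θ₃ := E[W̃ X | Z = 1], θ₄ := E[W̃ X | Z = 0], and P̃ := (W̃, W̃ X) ∈ ℝ². Then E[k̃(Z_j, Z_l) P̃_j P̃_lᵀ] = (1 − a) · [[θ₁² b² + θ₂² (1−b)², θ₁θ₃ b² + θ₂θ₄ (1−b)²], [θ₁θ₃ b² + θ₂θ₄ (1−b)², θ₃² b² + θ₄² (1−b)²]].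 -/
/-!
For `z, z' ∈ {0, 1}` the weight is
`k̃(z, z') = a + (1 - a) (1{z = 1} 1{z' = 1} + 1{z = 0} 1{z' = 0})`.
By independence and identical distribution each of the three resulting moments factorises
into one-sample moments. The `a`-term vanishes because `E[W̃ | σ(X)] = 0` forces
`E[W̃] = E[W̃ X] = 0`, and the others are `E[1{Z = 1} W̃] = b θ₁`, `E[1{Z = 0} W̃] = (1 - b) θ₂`,
and so on.
-/

open MeasureTheory ProbabilityTheory Matrix

lemma ite_mul_mul_eq_add_indicator {β : Type*} {ζ f g : β → ℝ} {x y : β}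
    (hx : ζ x = 0 ∨ ζ x = 1) (hy : ζ y = 0 ∨ ζ y = 1) (a : ℝ) :
    (if ζ x = ζ y then 1 else a) * (f x * g y) = a * (f x * g y) + (1 - a) *
      ({z | ζ z = 1}.indicator f x * {z | ζ z = 1}.indicator g y
        + {z | ζ z = 0}.indicator f x * {z | ζ z = 0}.indicator g y) := by
  rcases hx with hx | hx <;> rcases hy with hy | hy <;>
    simp only [hx, hy, ↓reduceIte, zero_ne_one, one_ne_zero, not_false_eq_true, Set.mem_ofPred_eq,
      Set.indicator_of_mem, Set.indicator_of_notMem, one_mul, zero_mul, mul_zero, zero_add,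
      add_zero] <;>
    ring

namespace MeasureTheory

variable {Ω : Type*} [mΩ : MeasurableSpace Ω] {μ : Measure Ω}

lemma integral_mul_eq_zero_of_condExp_ae_eq_zero [IsFiniteMeasure μ] {m : MeasurableSpace Ω}
    (hm : m ≤ mΩ) {f g : Ω → ℝ} (hf : StronglyMeasurable[m] f) (hgf : Integrable (g * f) μ)
    (hg : Integrable g μ) (hg0 : μ[g | m] =ᵐ[μ] 0) :
    ∫ ω, g ω * f ω ∂μ = 0 :=
  calc ∫ ω, g ω * f ω ∂μ = ∫ ω, (μ[g * f | m]) ω ∂μ := (integral_condExp hm).symm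
    _ = ∫ ω, (μ[g | m] * f) ω ∂μ :=
      integral_congr_ae (condExp_mul_of_stronglyMeasurable_right hf hgf hg)
    _ = 0 := by
      rw [integral_congr_ae (hg0.mul (ae_eq_refl f))]
      simp

lemma setIntegral_div_toReal_mul [IsFiniteMeasure μ] (s : Set Ω) (f : Ω → ℝ) :
    (∫ ω in s, f ω ∂μ) / (μ s).toReal * (μ s).toReal = ∫ ω in s, f ω ∂μ := by
  rcases eq_or_ne (μ s) 0 with hs | hs
  · simp [Measure.restrict_eq_zero.2 hs]
  · exact div_mul_cancel₀ _ (ENNReal.toReal_ne_zero.2 ⟨hs, measure_ne_top μ s⟩)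

lemma toReal_measure_setOf_eq_zero_eq_one_sub [IsProbabilityMeasure μ] {Z : Ω → ℝ}
    (hZ : Measurable Z) (hZ01 : ∀ ω, Z ω = 0 ∨ Z ω = 1) :
    (μ {ω | Z ω = 0}).toReal = 1 - (μ {ω | Z ω = 1}).toReal := by
  have hcompl : {ω | Z ω = 0} = {ω | Z ω = 1}ᶜ := by
    ext ω; rcases hZ01 ω with h | h <;> simp [h]
  rw [hcompl]
  exact probReal_compl_eq_one_sub (hZ (measurableSet_singleton 1))

lemma integral_indicator_comp_eq_setIntegral {β : Type*} [MeasurableSpace β] {T : Ω → β}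
    {s : Set β} (hs : MeasurableSet s) (hT : Measurable T) (f : β → ℝ) :
    ∫ ω, s.indicator f (T ω) ∂μ = ∫ ω in T ⁻¹' s, f (T ω) ∂μ := by
  rw [← integral_indicator (hT hs)]
  rfl

end MeasureTheory

namespace ProbabilityTheory

variable {Ω β : Type*} [MeasurableSpace Ω] [MeasurableSpace β] {μ : Measure Ω} {T₁ T₂ : Ω → β}

lemma IndepFun.integral_comp_mul_comp_of_identDistrib (hind : IndepFun T₁ T₂ μ)
    (hid : IdentDistrib T₁ T₂ μ μ) {φ ψ : β → ℝ} (hφ : Measurable φ) (hψ : Measurable ψ) :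
    ∫ ω, φ (T₁ ω) * ψ (T₂ ω) ∂μ = (∫ ω, φ (T₁ ω) ∂μ) * ∫ ω, ψ (T₁ ω) ∂μ := by
  rw [hind.integral_fun_comp_mul_comp hid.aemeasurable_fst hid.aemeasurable_snd
    hφ.aestronglyMeasurable hψ.aestronglyMeasurable]
  exact congrArg _ (hid.comp hψ).integral_eq.symm

lemma IndepFun.integrable_comp_mul_comp_of_identDistrib (hind : IndepFun T₁ T₂ μ)
    (hid : IdentDistrib T₁ T₂ μ μ) {φ ψ : β → ℝ} (hφ : Measurable φ) (hψ : Measurable ψ)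
    (hφi : Integrable (fun ω => φ (T₁ ω)) μ) (hψi : Integrable (fun ω => ψ (T₁ ω)) μ) :
    Integrable (fun ω => φ (T₁ ω) * ψ (T₂ ω)) μ :=
  (hind.comp hφ hψ).integrable_mul hφi ((hid.comp hψ).integrable_iff.1 hψi)

theorem IndepFun.integral_ite_mul_comp_mul_comp (hind : IndepFun T₁ T₂ μ)
    (hid : IdentDistrib T₁ T₂ μ μ) (hT : Measurable T₁) {ζ f g : β → ℝ} (hζ : Measurable ζ)
    (hf : Measurable f) (hg : Measurable g)
    (hζ₁ : ∀ ω, ζ (T₁ ω) = 0 ∨ ζ (T₁ ω) = 1) (hζ₂ : ∀ ω, ζ (T₂ ω) = 0 ∨ ζ (T₂ ω) = 1)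
    (hfi : Integrable (fun ω => f (T₁ ω)) μ) (hgi : Integrable (fun ω => g (T₁ ω)) μ)
    (hf0 : ∫ ω, f (T₁ ω) ∂μ = 0) (a : ℝ) :
    ∫ ω, (if ζ (T₁ ω) = ζ (T₂ ω) then 1 else a) * (f (T₁ ω) * g (T₂ ω)) ∂μ
      = (1 - a) *
        ((∫ ω in {ω | ζ (T₁ ω) = 1}, f (T₁ ω) ∂μ) * ∫ ω in {ω | ζ (T₁ ω) = 1}, g (T₁ ω) ∂μ
          + (∫ ω in {ω | ζ (T₁ ω) = 0}, f (T₁ ω) ∂μ) * ∫ ω in {ω | ζ (T₁ ω) = 0}, g (T₁ ω) ∂μ) := by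
  set s₁ := {z | ζ z = 1}
  set s₀ := {z | ζ z = 0}
  have hs₁ : MeasurableSet s₁ := hζ (measurableSet_singleton 1)
  have hs₀ : MeasurableSet s₀ := hζ (measurableSet_singleton 0)
  have hfg := hind.integrable_comp_mul_comp_of_identDistrib hid hf hg hfi hgi
  have hfg₁ := hind.integrable_comp_mul_comp_of_identDistrib hid (hf.indicator hs₁)
    (hg.indicator hs₁) (hfi.indicator (hT hs₁)) (hgi.indicator (hT hs₁))
  have hfg₀ := hind.integrable_comp_mul_comp_of_identDistrib hid (hf.indicator hs₀)
    (hg.indicator hs₀) (hfi.indicator (hT hs₀)) (hgi.indicator (hT hs₀))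
  calc _ = ∫ ω, a * (f (T₁ ω) * g (T₂ ω)) + (1 - a) *
          (s₁.indicator f (T₁ ω) * s₁.indicator g (T₂ ω)
            + s₀.indicator f (T₁ ω) * s₀.indicator g (T₂ ω)) ∂μ :=
        integral_congr_ae (ae_of_all _ fun ω => ite_mul_mul_eq_add_indicator (hζ₁ ω) (hζ₂ ω) a)
    _ = a * ∫ ω, f (T₁ ω) * g (T₂ ω) ∂μ + (1 - a) *
          ((∫ ω, s₁.indicator f (T₁ ω) * s₁.indicator g (T₂ ω) ∂μ)
            + ∫ ω, s₀.indicator f (T₁ ω) * s₀.indicator g (T₂ ω) ∂μ) := by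
        rw [integral_add (hfg.const_mul a) ?_, integral_const_mul, integral_const_mul,
          integral_add hfg₁ hfg₀]
        exact (hfg₁.add hfg₀).const_mul (1 - a)
    _ = _ := by
        rw [hind.integral_comp_mul_comp_of_identDistrib hid hf hg, hf0,
          hind.integral_comp_mul_comp_of_identDistrib hid (hf.indicator hs₁) (hg.indicator hs₁),
          hind.integral_comp_mul_comp_of_identDistrib hid (hf.indicator hs₀) (hg.indicator hs₀),
          integral_indicator_comp_eq_setIntegral hs₁ hT,
          integral_indicator_comp_eq_setIntegral hs₁ hT,
          integral_indicator_comp_eq_setIntegral hs₀ hT,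
          integral_indicator_comp_eq_setIntegral hs₀ hT]
        simp only [s₁, s₀, Set.preimage_ofPred_eq]
        ring

end ProbabilityTheory

theorem binary_instrument_smd_matrix_general
    {Ω : Type*} [MeasurableSpace Ω] (P : Measure Ω) [IsProbabilityMeasure P]
    (Wj Wl : Ω → ℝ) (Xj Xl : Ω → ℝ) (Zj Zl : Ω → ℝ)
    (hWjmeas : Measurable Wj)
    (hXjmeas : Measurable Xj)
    (hZjmeas : Measurable Zj)
    (hWint : Integrable Wj P) (hWXint : Integrable (fun ω => Wj ω * Xj ω) P)
    (hZjval : ∀ ω, Zj ω = 0 ∨ Zj ω = 1) (hZlval : ∀ ω, Zl ω = 0 ∨ Zl ω = 1)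
    (b : ℝ) (hb0 : 0 < b)
    (hbj : P {ω | Zj ω = 1} = ENNReal.ofReal b)
    (hindep : IndepFun (fun ω => (Wj ω, Xj ω, Zj ω)) (fun ω => (Wl ω, Xl ω, Zl ω)) P)
    (hident : IdentDistrib (fun ω => (Wj ω, Xj ω, Zj ω)) (fun ω => (Wl ω, Xl ω, Zl ω)) P P)
    (hcond : P[Wj | MeasurableSpace.comap Xj inferInstance] =ᵐ[P] 0)
    (a : ℝ)
    (θ₁ θ₂ θ₃ θ₄ : ℝ)
    (hθ₁ : θ₁ = (∫ ω in {ω | Zj ω = 1}, Wj ω ∂P) / (P {ω | Zj ω = 1}).toReal)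
    (hθ₂ : θ₂ = (∫ ω in {ω | Zj ω = 0}, Wj ω ∂P) / (P {ω | Zj ω = 0}).toReal)
    (hθ₃ : θ₃ = (∫ ω in {ω | Zj ω = 1}, Wj ω * Xj ω ∂P) / (P {ω | Zj ω = 1}).toReal)
    (hθ₄ : θ₄ = (∫ ω in {ω | Zj ω = 0}, Wj ω * Xj ω ∂P) / (P {ω | Zj ω = 0}).toReal)
    (Ptildej Ptildel : Ω → Fin 2 → ℝ)
    (hPtildej : ∀ ω, Ptildej ω = ![Wj ω, Wj ω * Xj ω])
    (hPtildel : ∀ ω, Ptildel ω = ![Wl ω, Wl ω * Xl ω]) :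
    (Matrix.of fun i j =>
        ∫ ω, (if Zj ω = Zl ω then (1 : ℝ) else a) * (Ptildej ω i * Ptildel ω j) ∂P)
      = (1 - a) •
        !![θ₁ ^ 2 * b ^ 2 + θ₂ ^ 2 * (1 - b) ^ 2, θ₁ * θ₃ * b ^ 2 + θ₂ * θ₄ * (1 - b) ^ 2;
           θ₁ * θ₃ * b ^ 2 + θ₂ * θ₄ * (1 - b) ^ 2, θ₃ ^ 2 * b ^ 2 + θ₄ ^ 2 * (1 - b) ^ 2] := by
  set φ : Fin 2 → ℝ × ℝ × ℝ → ℝ := ![Prod.fst, fun p => p.1 * p.2.1]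
  have hφ : ∀ i, Measurable (φ i) :=
    Fin.forall_fin_two.2 ⟨measurable_fst, measurable_fst.mul measurable_snd.fst⟩
  have hφi : ∀ i, Integrable (fun ω => φ i (Wj ω, Xj ω, Zj ω)) P :=
    Fin.forall_fin_two.2 ⟨hWint, hWXint⟩
  have hφ0 : ∀ i, ∫ ω, φ i (Wj ω, Xj ω, Zj ω) ∂P = 0 := Fin.forall_fin_two.2
    ⟨by simpa [φ] using (integral_mul_eq_zero_of_condExp_ae_eq_zero hXjmeas.comap_le
        stronglyMeasurable_one (by rwa [mul_one]) hWint hcond),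
      integral_mul_eq_zero_of_condExp_ae_eq_zero hXjmeas.comap_le
        (Measurable.of_comap_le le_rfl).stronglyMeasurable hWXint hWint hcond⟩
  have hb : (P {ω | Zj ω = 1}).toReal = b := by rw [hbj, ENNReal.toReal_ofReal hb0.le]
  have hb' : (P {ω | Zj ω = 0}).toReal = 1 - b := by
    rw [toReal_measure_setOf_eq_zero_eq_one_sub hZjmeas hZjval, hb]
  have hW₁ : ∫ ω in {ω | Zj ω = 1}, Wj ω ∂P = θ₁ * b := by
    rw [hθ₁, ← hb, setIntegral_div_toReal_mul]
  have hW₀ : ∫ ω in {ω | Zj ω = 0}, Wj ω ∂P = θ₂ * (1 - b) := by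
    rw [hθ₂, ← hb', setIntegral_div_toReal_mul]
  have hWX₁ : ∫ ω in {ω | Zj ω = 1}, Wj ω * Xj ω ∂P = θ₃ * b := by
    rw [hθ₃, ← hb, setIntegral_div_toReal_mul]
  have hWX₀ : ∫ ω in {ω | Zj ω = 0}, Wj ω * Xj ω ∂P = θ₄ * (1 - b) := by
    rw [hθ₄, ← hb', setIntegral_div_toReal_mul]
  ext i j
  have hPtilde (ω : Ω) :
      Ptildej ω i * Ptildel ω j = φ i (Wj ω, Xj ω, Zj ω) * φ j (Wl ω, Xl ω, Zl ω) := by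
    rw [hPtildej, hPtildel]; fin_cases i <;> fin_cases j <;> rfl
  rw [Matrix.of_apply, integral_congr_ae (ae_of_all _ fun ω => by rw [hPtilde]),
    hindep.integral_ite_mul_comp_mul_comp hident (hWjmeas.prodMk (hXjmeas.prodMk hZjmeas))
      measurable_snd.snd (hφ i) (hφ j) hZjval hZlval (hφi i) (hφi j) (hφ0 i)]
  fin_cases i <;> fin_cases j <;>
    simp only [φ, Fin.zero_eta, Fin.mk_one, Fin.isValue, cons_val', cons_val_fin_one, cons_val_zero,
      cons_val_one, Matrix.smul_apply, of_apply, smul_eq_mul, hW₁, hW₀, hWX₁, hWX₀] <;>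
    ring

/-- Explicit form of the SMD moment matrix with a binary instrument:
for iid tuples `(W̃_j, X_j, Z_j)` and `(W̃_l, X_l, Z_l)` with `E[W̃ | σ(X)] = 0` a.s.,
`Z ∈ {0,1}`, `P(Z=1) = b`, weight `k̃(z,z') = 1` if `z = z'` and `a` otherwise, and
`P̃ := (W̃, W̃X)`, the matrix `E[k̃(Z_j,Z_l) P̃_j P̃_lᵀ]` equals
`(1−a) · [[θ₁²b² + θ₂²(1−b)², θ₁θ₃b² + θ₂θ₄(1−b)²], [θ₁θ₃b² + θ₂θ₄(1−b)², θ₃²b² + θ₄²(1−b)²]]`. -/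
theorem binary_instrument_smd_matrix
    {Ω : Type*} [MeasurableSpace Ω] (P : Measure Ω) [IsProbabilityMeasure P]
    (Wj Wl : Ω → ℝ) (Xj Xl : Ω → ℝ) (Zj Zl : Ω → ℝ)
    (hWjmeas : Measurable Wj) (hWlmeas : Measurable Wl)
    (hXjmeas : Measurable Xj) (hXlmeas : Measurable Xl)
    (hZjmeas : Measurable Zj) (hZlmeas : Measurable Zl)
    (hWint : Integrable Wj P) (hWXint : Integrable (fun ω => Wj ω * Xj ω) P)
    (hZjval : ∀ ω, Zj ω = 0 ∨ Zj ω = 1) (hZlval : ∀ ω, Zl ω = 0 ∨ Zl ω = 1)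
    (b : ℝ) (hb0 : 0 < b) (hb1 : b < 1)
    (hbj : P {ω | Zj ω = 1} = ENNReal.ofReal b)
    (hindep : IndepFun (fun ω => (Wj ω, Xj ω, Zj ω)) (fun ω => (Wl ω, Xl ω, Zl ω)) P)
    (hident : IdentDistrib (fun ω => (Wj ω, Xj ω, Zj ω)) (fun ω => (Wl ω, Xl ω, Zl ω)) P P)
    (hcond : P[Wj | MeasurableSpace.comap Xj inferInstance] =ᵐ[P] 0)
    (a : ℝ)
    (θ₁ θ₂ θ₃ θ₄ : ℝ)
    (hθ₁ : θ₁ = (∫ ω in {ω | Zj ω = 1}, Wj ω ∂P) / (P {ω | Zj ω = 1}).toReal)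
    (hθ₂ : θ₂ = (∫ ω in {ω | Zj ω = 0}, Wj ω ∂P) / (P {ω | Zj ω = 0}).toReal)
    (hθ₃ : θ₃ = (∫ ω in {ω | Zj ω = 1}, Wj ω * Xj ω ∂P) / (P {ω | Zj ω = 1}).toReal)
    (hθ₄ : θ₄ = (∫ ω in {ω | Zj ω = 0}, Wj ω * Xj ω ∂P) / (P {ω | Zj ω = 0}).toReal)
    (Ptildej Ptildel : Ω → Fin 2 → ℝ)
    (hPtildej : ∀ ω, Ptildej ω = ![Wj ω, Wj ω * Xj ω])
    (hPtildel : ∀ ω, Ptildel ω = ![Wl ω, Wl ω * Xl ω]) :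
    (Matrix.of fun i j =>
        ∫ ω, (if Zj ω = Zl ω then (1 : ℝ) else a) * (Ptildej ω i * Ptildel ω j) ∂P)
      = (1 - a) •
        !![θ₁ ^ 2 * b ^ 2 + θ₂ ^ 2 * (1 - b) ^ 2, θ₁ * θ₃ * b ^ 2 + θ₂ * θ₄ * (1 - b) ^ 2;
           θ₁ * θ₃ * b ^ 2 + θ₂ * θ₄ * (1 - b) ^ 2, θ₃ ^ 2 * b ^ 2 + θ₄ ^ 2 * (1 - b) ^ 2] :=
  binary_instrument_smd_matrix_general P Wj Wl Xj Xl Zj Zl hWjmeas hXjmeas hZjmeas hWint hWXint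
    hZjval hZlval b hb0 hbj hindep hident hcond a θ₁ θ₂ θ₃ θ₄ hθ₁ hθ₂ hθ₃ hθ₄ Ptildej Ptildel
    hPtildej hPtildel
end

section
/- In the partially linear model with two independent observations D_j, D_l with the common distribution, define M_∞(θ) := E[(ỹ_j − ⟨P̃_j, θ⟩)(ỹ_l − ⟨P̃_l, θ⟩) k(Z_j − Z_l)] for θ ∈ ℝ^p. Then for every θ ∈ ℝ^p, M_∞(θ) = M_∞(θ₀) + ∫_{ℝ^{q_z}} |E[⟨θ − θ₀, P̃⟩ · exp(i⟨t, Z⟩)]|² dμ(t); in particular M_∞(θ) ≥ M_∞(θ₀) for all θ. -/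
/-!
Write `A = ỹ - ⟨P̃, θ⟩`. Expanding `k` as the Fourier transform of `μ` and applying Fubini,
`M_∞(θ) = ∫ E[A_j A_l exp(i⟨t, Z_j - Z_l⟩)] dμ(t)`, and for an independent, identically
distributed pair the inner expectation factors as `|E[A exp(i⟨t, Z⟩)]|²`. Conditioning the model
on `X` gives `A = ε - ⟨θ - θ₀, P̃⟩` almost surely, and `E[ε exp(i⟨t, Z⟩)] = 0` because
`E[ε | X, Z] = 0`. Hence `M_∞(θ) = ∫ |E[⟨θ - θ₀, P̃⟩ exp(i⟨t, Z⟩)]|² dμ(t)`, which vanishes at `θ₀`.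
-/

open MeasureTheory ProbabilityTheory Complex Matrix
open scoped ComplexConjugate

section ConditionalExpectation

variable {Ω E F : Type*} {m m₀ : MeasurableSpace Ω} {μ : Measure[m₀] Ω}
  [NormedAddCommGroup E] [NormedSpace ℝ E] [CompleteSpace E]
  [NormedAddCommGroup F] [NormedSpace ℝ F] [CompleteSpace F]

theorem integral_smul_eq_zero_of_condExp_eq_zero [IsFiniteMeasure μ] (hm : m ≤ m₀)
    {ε : Ω → ℝ} (hε : Integrable ε μ) (hcond : μ[ε|m] =ᵐ[μ] 0) {g : Ω → E}
    (hg : StronglyMeasurable[m] g) {c : ℝ} (hgc : ∀ᵐ ω ∂μ, ‖g ω‖ ≤ c) :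
    ∫ ω, ε ω • g ω ∂μ = 0 := by
  have hpull : μ[fun ω => ε ω • g ω|m] =ᵐ[μ] fun ω => μ[ε|m] ω • g ω :=
    condExp_stronglyMeasurable_bilin_of_bound (ContinuousLinearMap.lsmul ℝ ℝ).flip hm hg hε c hgc
  rw [← integral_condExp hm]
  refine integral_eq_zero_of_ae ?_
  filter_upwards [hpull, hcond] with ω hpull hcond
  simp [hpull, hcond]

theorem condExp_clm_comp_add_add_of_condExp_eq_zero (hm : m ≤ m₀) [SigmaFinite (μ.trim hm)]
    (T : E →L[ℝ] F) {V : Ω → E} {h ε : Ω → F} (hV : Integrable V μ)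
    (hh : StronglyMeasurable[m] h) (hhi : Integrable h μ) (hε : Integrable ε μ)
    (hcond : μ[ε|m] =ᵐ[μ] 0) :
    μ[fun ω => T (V ω) + h ω + ε ω|m] =ᵐ[μ] fun ω => T (μ[V|m] ω) + h ω := by
  have hTV : Integrable (fun ω => T (V ω)) μ := T.integrable_comp hV
  filter_upwards [condExp_add (hTV.add hhi) hε m, condExp_add hTV hhi m,
    T.comp_condExp_comm hV (m := m), hcond] with ω h₁ h₂ h₃ h₄
  change μ[(fun ω => T (V ω)) + h + ε|m] ω = _
  rw [h₁, Pi.add_apply, h₂, Pi.add_apply, h₄, condExp_of_stronglyMeasurable hm hh hhi]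
  simp only [Pi.zero_apply, add_zero]
  exact congrArg (· + h ω) h₃.symm

end ConditionalExpectation

theorem MeasureTheory.Integrable.ofReal_mul_exp_I_mul {Ω : Type*} [MeasurableSpace Ω]
    {μ : Measure Ω} {g r : Ω → ℝ} (hg : Integrable g μ) (hr : AEMeasurable r μ) :
    Integrable (fun ω => (g ω : ℂ) * exp (I * r ω)) μ :=
  hg.ofReal.mul_bdd
    ((by fun_prop : Measurable fun x : ℝ => exp (I * x)).comp_aemeasurable hr).aestronglyMeasurable
    (ae_of_all _ fun ω => (norm_exp_I_mul_ofReal _).le)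

theorem MeasureTheory.Integrable.dotProduct_const {Ω : Type*} [MeasurableSpace Ω] {μ : Measure Ω}
    {n : ℕ} {V : Ω → Fin n → ℝ} (hV : Integrable V μ) (c : Fin n → ℝ) :
    Integrable (fun ω => V ω ⬝ᵥ c) μ := by
  simpa [dotProduct] using integrable_finsetSum Finset.univ fun j _ => (hV.eval j).mul_const (c j)

theorem ProbabilityTheory.IndepFun.integral_mul_conj_eq_sq_norm {Ω β : Type*}
    [MeasurableSpace Ω] [MeasurableSpace β] {P : Measure Ω} {D₀ D₁ : Ω → β}
    (hind : IndepFun D₀ D₁ P) (hid : IdentDistrib D₀ D₁ P P)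
    {φ : β → ℂ} (hφ : Measurable φ) :
    ∫ ω, φ (D₀ ω) * conj (φ (D₁ ω)) ∂P = ((‖∫ ω, φ (D₀ ω) ∂P‖ ^ 2 : ℝ) : ℂ) := by
  have hsame : ∫ ω, φ (D₁ ω) ∂P = ∫ ω, φ (D₀ ω) ∂P := (hid.comp hφ).integral_eq.symm
  rw [hind.integral_fun_comp_mul_comp (g := fun b => conj (φ b)) hid.aemeasurable_fst
    hid.aemeasurable_snd hφ.aestronglyMeasurable (by fun_prop), integral_conj, hsame, mul_conj,
    ← Complex.sq_norm]

section IdenticallyDistributedPair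

variable {Ω : Type*} [MeasurableSpace Ω] {P : Measure Ω} {q : ℕ} {A₀ A₁ : Ω → ℝ}
  {Z₀ Z₁ : Ω → Fin q → ℝ}

theorem integral_mul_mul_exp_sub_eq_sq_norm
    (hind : IndepFun (fun ω => (A₀ ω, Z₀ ω)) (fun ω => (A₁ ω, Z₁ ω)) P)
    (hid : IdentDistrib (fun ω => (A₀ ω, Z₀ ω)) (fun ω => (A₁ ω, Z₁ ω)) P P) (t : Fin q → ℝ) :
    ∫ ω, (A₀ ω : ℂ) * A₁ ω * exp (I * ((t ⬝ᵥ (Z₀ ω - Z₁ ω) : ℝ) : ℂ)) ∂P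
      = ((‖∫ ω, (A₀ ω : ℂ) * exp (I * ((t ⬝ᵥ Z₀ ω : ℝ) : ℂ)) ∂P‖ ^ 2 : ℝ) : ℂ) := by
  rw [← hind.integral_mul_conj_eq_sq_norm hid
    (φ := fun w => (w.1 : ℂ) * exp (I * ((t ⬝ᵥ w.2 : ℝ) : ℂ))) (by fun_prop)]
  congr 1 with ω
  rw [map_mul, conj_ofReal, ← exp_conj, map_mul, conj_I, conj_ofReal, dotProduct_sub,
    Complex.ofReal_sub, mul_sub, sub_eq_add_neg, exp_add, neg_mul]
  ring

theorem integral_mul_mul_kernel_eq_integral_sq_norm [SFinite P] (μ : Measure (Fin q → ℝ))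
    [IsFiniteMeasure μ] {k : (Fin q → ℝ) → ℝ}
    (hk : ∀ u, (k u : ℂ) = ∫ t, exp (I * ((t ⬝ᵥ u : ℝ) : ℂ)) ∂μ)
    (hind : IndepFun (fun ω => (A₀ ω, Z₀ ω)) (fun ω => (A₁ ω, Z₁ ω)) P)
    (hid : IdentDistrib (fun ω => (A₀ ω, Z₀ ω)) (fun ω => (A₁ ω, Z₁ ω)) P P)
    (hA : Integrable A₀ P) :
    ∫ ω, A₀ ω * A₁ ω * k (Z₀ ω - Z₁ ω) ∂P
      = ∫ t, ‖∫ ω, (A₀ ω : ℂ) * exp (I * ((t ⬝ᵥ Z₀ ω : ℝ) : ℂ)) ∂P‖ ^ 2 ∂μ := by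
  have hAA : Integrable (fun ω => A₀ ω * A₁ ω) P :=
    (hind.comp measurable_fst measurable_fst).integrable_mul hA
      ((hid.comp measurable_fst).integrable_snd hA)
  have hint : Integrable (Function.uncurry fun ω (t : Fin q → ℝ) =>
      (A₀ ω : ℂ) * A₁ ω * exp (I * ((t ⬝ᵥ (Z₀ ω - Z₁ ω) : ℝ) : ℂ))) (P.prod μ) := by
    refine (hAA.ofReal.mul_prod (integrable_const (1 : ℂ) (μ := μ))).mono ?_
      (ae_of_all _ fun ⟨ω, t⟩ => ?_)
    · have hG : Continuous fun x : ((ℝ × (Fin q → ℝ)) × (ℝ × (Fin q → ℝ))) × (Fin q → ℝ) =>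
          (x.1.1.1 : ℂ) * x.1.2.1 * exp (I * ((x.2 ⬝ᵥ (x.1.1.2 - x.1.2.2) : ℝ) : ℂ)) := by
        fun_prop
      have hW : AEMeasurable (fun ω => ((A₀ ω, Z₀ ω), (A₁ ω, Z₁ ω))) P :=
        hid.aemeasurable_fst.prodMk hid.aemeasurable_snd
      exact (hG.measurable.comp_aemeasurable
        (hW.comp_fst.prodMk measurable_snd.aemeasurable)).aestronglyMeasurable
    · rw [Function.uncurry_apply_pair, norm_mul, norm_exp_I_mul_ofReal]
      simp
  apply ofReal_injective
  calc ((∫ ω, A₀ ω * A₁ ω * k (Z₀ ω - Z₁ ω) ∂P : ℝ) : ℂ)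
      = ∫ ω, ∫ t, (A₀ ω : ℂ) * A₁ ω * exp (I * ((t ⬝ᵥ (Z₀ ω - Z₁ ω) : ℝ) : ℂ)) ∂μ ∂P := by
        rw [← integral_complex_ofReal]
        congr 1 with ω
        rw [Complex.ofReal_mul, Complex.ofReal_mul, hk, integral_const_mul]
    _ = ∫ t, ∫ ω, (A₀ ω : ℂ) * A₁ ω * exp (I * ((t ⬝ᵥ (Z₀ ω - Z₁ ω) : ℝ) : ℂ)) ∂P ∂μ :=
        integral_integral_swap hint
    _ = _ := by simp_rw [integral_mul_mul_exp_sub_eq_sq_norm hind hid, integral_complex_ofReal]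

end IdenticallyDistributedPair

namespace PartiallyLinearModel

variable {Ω : Type*} {mΩ : MeasurableSpace Ω} {P : Measure Ω} {p qX qz : ℕ}
  {θ₀ : Fin p → ℝ} {f : (Fin qX → ℝ) → ℝ} {y ε : Ω → ℝ} {Pv : Ω → Fin p → ℝ}
  {X : Ω → Fin qX → ℝ} {Z : Ω → Fin qz → ℝ}
  {gy : (Fin qX → ℝ) → ℝ} {gP : (Fin qX → ℝ) → Fin p → ℝ}

theorem integrable_residual (hy : Integrable y P) (hPv : Integrable Pv P)
    (hgy : (fun ω => gy (X ω)) =ᵐ[P] P[y|MeasurableSpace.comap X inferInstance])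
    (hgP : (fun ω => gP (X ω)) =ᵐ[P] P[Pv|MeasurableSpace.comap X inferInstance])
    (θ : Fin p → ℝ) :
    Integrable (fun ω => y ω - gy (X ω) - (Pv ω - gP (X ω)) ⬝ᵥ θ) P :=
  (hy.sub (integrable_condExp.congr hgy.symm)).sub
    ((hPv.sub (integrable_condExp.congr hgP.symm)).dotProduct_const θ)

theorem residual_ae_eq [IsFiniteMeasure P] (hf : Measurable f) (hX : Measurable X)
    (hZ : Measurable Z) (hy : Integrable y P) (hPv : Integrable Pv P) (hε : Integrable ε P)
    (hmodel : ∀ ω, y ω = Pv ω ⬝ᵥ θ₀ + f (X ω) + ε ω)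
    (hεcond : P[ε|MeasurableSpace.comap (fun ω => (X ω, Z ω)) inferInstance] =ᵐ[P] 0)
    (hgy : (fun ω => gy (X ω)) =ᵐ[P] P[y|MeasurableSpace.comap X inferInstance])
    (hgP : (fun ω => gP (X ω)) =ᵐ[P] P[Pv|MeasurableSpace.comap X inferInstance])
    (θ : Fin p → ℝ) :
    (fun ω => y ω - gy (X ω) - (Pv ω - gP (X ω)) ⬝ᵥ θ)
      =ᵐ[P] fun ω => ε ω - (θ - θ₀) ⬝ᵥ (Pv ω - gP (X ω)) := by
  have hmX : MeasurableSpace.comap X inferInstance ≤ mΩ := hX.comap_le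
  have hmXZ : MeasurableSpace.comap (fun ω => (X ω, Z ω)) inferInstance ≤ mΩ :=
    (hX.prodMk hZ).comap_le
  have hεX : P[ε|MeasurableSpace.comap X inferInstance] =ᵐ[P] 0 := by
    have hle : MeasurableSpace.comap X inferInstance
        ≤ MeasurableSpace.comap (fun ω => (X ω, Z ω)) inferInstance :=
      Measurable.comap_le (f := X) (measurable_fst.comp (comap_measurable _))
    exact (condExp_condExp_of_le hle hmXZ).symm.trans
      ((condExp_congr_ae hεcond).trans condExp_zero.eventuallyEq)
  have hfX : Integrable (fun ω => f (X ω)) P := by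
    refine ((hy.sub (hPv.dotProduct_const θ₀)).sub hε).congr (ae_of_all _ fun ω => ?_)
    simp only [Pi.sub_apply, hmodel ω]
    ring
  have hfXm : StronglyMeasurable[MeasurableSpace.comap X inferInstance] fun ω => f (X ω) :=
    (hf.comp (comap_measurable X)).stronglyMeasurable
  let T : (Fin p → ℝ) →L[ℝ] ℝ := LinearMap.toContinuousLinearMap (dotProductEquiv ℝ (Fin p) θ₀)
  have hcondy : P[y|MeasurableSpace.comap X inferInstance]
      =ᵐ[P] fun ω => θ₀ ⬝ᵥ P[Pv|MeasurableSpace.comap X inferInstance] ω + f (X ω) := by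
    have hy_eq : y = fun ω => T (Pv ω) + f (X ω) + ε ω := by
      ext ω
      simp [T, hmodel ω, dotProduct_comm θ₀]
    rw [hy_eq]
    exact condExp_clm_comp_add_add_of_condExp_eq_zero hmX T hPv hfXm hfX hε hεX
  filter_upwards [hgy, hgP, hcondy] with ω hgyω hgPω hcondyω
  rw [hgyω, hgPω, hcondyω, hmodel ω]
  simp only [dotProduct_sub, sub_dotProduct, dotProduct_comm θ, dotProduct_comm θ₀]
  ring

theorem integral_residual_mul_exp [IsFiniteMeasure P] (hf : Measurable f) (hX : Measurable X)
    (hZ : Measurable Z) (hy : Integrable y P) (hPv : Integrable Pv P) (hε : Integrable ε P)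
    (hmodel : ∀ ω, y ω = Pv ω ⬝ᵥ θ₀ + f (X ω) + ε ω)
    (hεcond : P[ε|MeasurableSpace.comap (fun ω => (X ω, Z ω)) inferInstance] =ᵐ[P] 0)
    (hgy : (fun ω => gy (X ω)) =ᵐ[P] P[y|MeasurableSpace.comap X inferInstance])
    (hgP : (fun ω => gP (X ω)) =ᵐ[P] P[Pv|MeasurableSpace.comap X inferInstance])
    (θ : Fin p → ℝ) (t : Fin qz → ℝ) :
    ∫ ω, ((y ω - gy (X ω) - (Pv ω - gP (X ω)) ⬝ᵥ θ : ℝ) : ℂ) * exp (I * ((t ⬝ᵥ Z ω : ℝ) : ℂ)) ∂P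
      = -∫ ω, (((θ - θ₀) ⬝ᵥ (Pv ω - gP (X ω)) : ℝ) : ℂ) * exp (I * ((t ⬝ᵥ Z ω : ℝ) : ℂ)) ∂P := by
  have hexp : Measurable fun z : Fin qz → ℝ => exp (I * ((t ⬝ᵥ z : ℝ) : ℂ)) := by fun_prop
  have hPtil : Integrable (fun ω => (θ - θ₀) ⬝ᵥ (Pv ω - gP (X ω))) P :=
    ((hPv.sub (integrable_condExp.congr hgP.symm)).dotProduct_const (θ - θ₀)).congr
      (ae_of_all _ fun ω => dotProduct_comm _ _)
  have horth : ∫ ω, (ε ω : ℂ) * exp (I * ((t ⬝ᵥ Z ω : ℝ) : ℂ)) ∂P = 0 := by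
    simp_rw [← real_smul]
    exact integral_smul_eq_zero_of_condExp_eq_zero (hX.prodMk hZ).comap_le hε hεcond
      ((hexp.comp measurable_snd).comp (comap_measurable _)).stronglyMeasurable
      (ae_of_all _ fun ω => (norm_exp_I_mul_ofReal _).le)
  have hZt : AEMeasurable (fun ω => t ⬝ᵥ Z ω) P := by fun_prop
  rw [← zero_sub, ← horth, ← integral_sub (hε.ofReal_mul_exp_I_mul hZt)
    (hPtil.ofReal_mul_exp_I_mul hZt)]
  refine integral_congr_ae ?_
  filter_upwards [residual_ae_eq hf hX hZ hy hPv hε hmodel hεcond hgy hgP θ] with ω hω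
  rw [hω, Complex.ofReal_sub, sub_mul]

end PartiallyLinearModel

theorem smd_objective_decomposition_general
    {Ω : Type*} [MeasurableSpace Ω] (P : Measure Ω) [IsProbabilityMeasure P]
    {p qX qz : ℕ}
    (μ : Measure (Fin qz → ℝ)) [IsFiniteMeasure μ]
    (k : (Fin qz → ℝ) → ℝ)
    (hk : ∀ u, (k u : ℂ) = ∫ t, Complex.exp (Complex.I * ((t ⬝ᵥ u : ℝ) : ℂ)) ∂μ)
    (θ₀ : Fin p → ℝ) (f : (Fin qX → ℝ) → ℝ) (hfmeas : Measurable f)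
    (y : Fin 2 → Ω → ℝ) (Pv : Fin 2 → Ω → Fin p → ℝ)
    (X : Fin 2 → Ω → Fin qX → ℝ) (Z : Fin 2 → Ω → Fin qz → ℝ)
    (ε : Fin 2 → Ω → ℝ)
    (hXmeas : ∀ i, Measurable (X i)) (hZmeas : ∀ i, Measurable (Z i))
    (hyL2 : ∀ i, MemLp (y i) 2 P) (hPL2 : ∀ i, MemLp (Pv i) 2 P)
    (hεint : ∀ i, Integrable (ε i) P)
    (hmodel : ∀ i ω, y i ω = Pv i ω ⬝ᵥ θ₀ + f (X i ω) + ε i ω)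
    (hεcond : ∀ i, P[ε i | MeasurableSpace.comap (fun ω => (X i ω, Z i ω)) inferInstance]
        =ᵐ[P] 0)
    (hindep : IndepFun (fun ω => (y 0 ω, Pv 0 ω, X 0 ω, Z 0 ω))
        (fun ω => (y 1 ω, Pv 1 ω, X 1 ω, Z 1 ω)) P)
    (hident : IdentDistrib (fun ω => (y 0 ω, Pv 0 ω, X 0 ω, Z 0 ω))
        (fun ω => (y 1 ω, Pv 1 ω, X 1 ω, Z 1 ω)) P P)
    (gy : (Fin qX → ℝ) → ℝ) (gP : (Fin qX → ℝ) → Fin p → ℝ)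
    (hgymeas : Measurable gy) (hgPmeas : Measurable gP)
    (hgy : ∀ i, (fun ω => gy (X i ω))
        =ᵐ[P] P[y i | MeasurableSpace.comap (X i) inferInstance])
    (hgP : ∀ i, (fun ω => gP (X i ω))
        =ᵐ[P] P[Pv i | MeasurableSpace.comap (X i) inferInstance])
    (ytil : Fin 2 → Ω → ℝ) (Ptil : Fin 2 → Ω → Fin p → ℝ)
    (hytil : ∀ i ω, ytil i ω = y i ω - gy (X i ω))
    (hPtil : ∀ i ω, Ptil i ω = Pv i ω - gP (X i ω))
    (Minf : (Fin p → ℝ) → ℝ)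
    (hMinf : ∀ θ, Minf θ = ∫ ω, (ytil 0 ω - Ptil 0 ω ⬝ᵥ θ) * (ytil 1 ω - Ptil 1 ω ⬝ᵥ θ)
        * k (Z 0 ω - Z 1 ω) ∂P) :
    ∀ θ : Fin p → ℝ,
      Minf θ = Minf θ₀ +
        ∫ t, (‖∫ ω, (((θ - θ₀) ⬝ᵥ Ptil 0 ω : ℝ) : ℂ) *
            Complex.exp (Complex.I * ((t ⬝ᵥ Z 0 ω : ℝ) : ℂ)) ∂P‖) ^ 2 ∂μ ∧
      Minf θ₀ ≤ Minf θ := by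
  have hy := (hyL2 0).integrable one_le_two
  have hPv := (hPL2 0).integrable one_le_two
  have key : ∀ θ, Minf θ = ∫ t, (‖∫ ω, (((θ - θ₀) ⬝ᵥ Ptil 0 ω : ℝ) : ℂ) *
      Complex.exp (Complex.I * ((t ⬝ᵥ Z 0 ω : ℝ) : ℂ)) ∂P‖) ^ 2 ∂μ := by
    intro θ
    let a : ℝ × (Fin p → ℝ) × (Fin qX → ℝ) × (Fin qz → ℝ) → ℝ × (Fin qz → ℝ) :=
      fun v => (v.1 - gy v.2.2.1 - (v.2.1 - gP v.2.2.1) ⬝ᵥ θ, v.2.2.2)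
    have ha : Measurable a := by fun_prop
    simp only [hMinf, hytil, hPtil]
    rw [integral_mul_mul_kernel_eq_integral_sq_norm μ hk (hindep.comp ha ha) (hident.comp ha)
      (PartiallyLinearModel.integrable_residual hy hPv (hgy 0) (hgP 0) θ)]
    congr! 3 with t
    rw [PartiallyLinearModel.integral_residual_mul_exp hfmeas (hXmeas 0) (hZmeas 0) hy hPv
      (hεint 0) (hmodel 0) (hεcond 0) (hgy 0) (hgP 0), norm_neg]
  have h0 : Minf θ₀ = 0 := by simp [key]
  intro θ
  exact ⟨by rw [h0, zero_add, key], by rw [h0, key]; positivity⟩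

/-- Decomposition of the SMD population objective: for every `θ`,
`M_∞(θ) = M_∞(θ₀) + ∫ |E[⟨θ − θ₀, P̃⟩ exp(i⟨t,Z⟩)]|² dμ(t)`;
in particular `M_∞(θ) ≥ M_∞(θ₀)`. -/
theorem smd_objective_decomposition
    {Ω : Type*} [MeasurableSpace Ω] (P : Measure Ω) [IsProbabilityMeasure P]
    {p qX qz : ℕ}
    (μ : Measure (Fin qz → ℝ)) [IsFiniteMeasure μ]
    (hμsymm : μ.map (fun t => -t) = μ)
    (k : (Fin qz → ℝ) → ℝ)
    (hk : ∀ u, (k u : ℂ) = ∫ t, Complex.exp (Complex.I * ((t ⬝ᵥ u : ℝ) : ℂ)) ∂μ)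
    (θ₀ : Fin p → ℝ) (f : (Fin qX → ℝ) → ℝ) (hfmeas : Measurable f)
    (y : Fin 2 → Ω → ℝ) (Pv : Fin 2 → Ω → Fin p → ℝ)
    (X : Fin 2 → Ω → Fin qX → ℝ) (Z : Fin 2 → Ω → Fin qz → ℝ)
    (ε : Fin 2 → Ω → ℝ)
    (hymeas : ∀ i, Measurable (y i)) (hPmeas : ∀ i, Measurable (Pv i))
    (hXmeas : ∀ i, Measurable (X i)) (hZmeas : ∀ i, Measurable (Z i))
    (hyL2 : ∀ i, MemLp (y i) 2 P) (hPL2 : ∀ i, MemLp (Pv i) 2 P)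
    (hXL2 : ∀ i, MemLp (X i) 2 P) (hZL2 : ∀ i, MemLp (Z i) 2 P)
    (hεint : ∀ i, Integrable (ε i) P)
    (hmodel : ∀ i ω, y i ω = Pv i ω ⬝ᵥ θ₀ + f (X i ω) + ε i ω)
    (hεcond : ∀ i, P[ε i | MeasurableSpace.comap (fun ω => (X i ω, Z i ω)) inferInstance]
        =ᵐ[P] 0)
    (hindep : IndepFun (fun ω => (y 0 ω, Pv 0 ω, X 0 ω, Z 0 ω))
        (fun ω => (y 1 ω, Pv 1 ω, X 1 ω, Z 1 ω)) P)
    (hident : IdentDistrib (fun ω => (y 0 ω, Pv 0 ω, X 0 ω, Z 0 ω))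
        (fun ω => (y 1 ω, Pv 1 ω, X 1 ω, Z 1 ω)) P P)
    (gy : (Fin qX → ℝ) → ℝ) (gP : (Fin qX → ℝ) → Fin p → ℝ)
    (hgymeas : Measurable gy) (hgPmeas : Measurable gP)
    (hgy : ∀ i, (fun ω => gy (X i ω))
        =ᵐ[P] P[y i | MeasurableSpace.comap (X i) inferInstance])
    (hgP : ∀ i, (fun ω => gP (X i ω))
        =ᵐ[P] P[Pv i | MeasurableSpace.comap (X i) inferInstance])
    (ytil : Fin 2 → Ω → ℝ) (Ptil : Fin 2 → Ω → Fin p → ℝ)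
    (hytil : ∀ i ω, ytil i ω = y i ω - gy (X i ω))
    (hPtil : ∀ i ω, Ptil i ω = Pv i ω - gP (X i ω))
    (Minf : (Fin p → ℝ) → ℝ)
    (hMinf : ∀ θ, Minf θ = ∫ ω, (ytil 0 ω - Ptil 0 ω ⬝ᵥ θ) * (ytil 1 ω - Ptil 1 ω ⬝ᵥ θ)
        * k (Z 0 ω - Z 1 ω) ∂P) :
    ∀ θ : Fin p → ℝ,
      Minf θ = Minf θ₀ +
        ∫ t, (‖∫ ω, (((θ - θ₀) ⬝ᵥ Ptil 0 ω : ℝ) : ℂ) *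
            Complex.exp (Complex.I * ((t ⬝ᵥ Z 0 ω : ℝ) : ℂ)) ∂P‖) ^ 2 ∂μ ∧
      Minf θ₀ ≤ Minf θ :=
  smd_objective_decomposition_general P μ k hk θ₀ f hfmeas y Pv X Z ε hXmeas hZmeas hyL2 hPL2 hεint
    hmodel hεcond hindep hident gy gP hgymeas hgPmeas hgy hgP ytil Ptil hytil hPtil Minf hMinf
end
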